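/- arXiv:2604.20339 — 6 statements merged into one kernel-verified Lean document; each statement's English description precedes it below -/
import Mathlib

section
/- (Half-interval Hardy-type estimate) For every n>0 and every γ∈(0,1) there exists a constant C>0 such that for every u∈V one has n·∫_{−1}^{−1/2} u(x)²/(1−x²)^γ dx ≤ C·∫_{−1}^{0} u(x)² dx + ∫_{−1}^{0} (1−x²)·u′(x)² dx. -/
open MeasureTheory Set Filter

noncomputable section

/-- `u` belongs to the weighted space `V` on `I = (-1,1)`: it is square integrable on `I`,
locally absolutely continuous on `I` with a.e. derivative `u'`, and `√(1-x²)·u'` is square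
integrable on `I`. -/
structure MemV (u u' : ℝ → ℝ) : Prop where
  sq_int : IntegrableOn (fun x => u x ^ 2) (Ioo (-1:ℝ) 1)
  locAC : ∀ a b : ℝ, a ∈ Ioo (-1:ℝ) 1 → b ∈ Ioo (-1:ℝ) 1 →
      u b - u a = ∫ t in a..b, u' t
  deriv_intble : ∀ a b : ℝ, a ∈ Ioo (-1:ℝ) 1 → b ∈ Ioo (-1:ℝ) 1 →
      IntervalIntegrable u' volume a b
  wsq_int : IntegrableOn (fun x => (1 - x ^ 2) * u' x ^ 2) (Ioo (-1:ℝ) 1)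


open Topology

/-!
Near `x = -1` the weight `1 - x²` degenerates like `x + 1`. For small `δ`, the mean of `u²` over
`(-1 + δ, -1 + 2δ)` gives a point `y` there with `u y ^ 2 ≤ δ⁻¹ ∫ u²`. For `x < y`, Cauchy–Schwarz
against the weight gives `(u y - u x)² ≤ D log ((y + 1) / (x + 1))`, where `D` is the weighted
energy, and `log r ≤ r ^ β / β` turns this into
`u x ^ 2 ≤ 2 δ⁻¹ ∫ u² + 2 D (2δ) ^ β (x + 1) ^ (-β) / β`. With `γ + β < 1` this is integrable
against `(x + 1) ^ (-γ)`, and the coefficient of `D` is `O(δ ^ β)`, hence at most `1 / n` once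
`δ` is small. For `x ≥ -1 + δ` the weight `(1 - x²) ^ (-γ)` is at most `δ ^ (-γ)`.
-/

theorem sq_integral_le_integral_mul_sq_mul_integral_inv {α : Type*} [MeasurableSpace α]
    {μ : Measure α} {f w : α → ℝ} (hw : ∀ᵐ t ∂μ, 0 < w t) (hf : Integrable f μ)
    (hwf : Integrable (fun t => w t * f t ^ 2) μ) (hw_inv : Integrable (fun t => (w t)⁻¹) μ) :
    (∫ t, f t ∂μ) ^ 2 ≤ (∫ t, w t * f t ^ 2 ∂μ) * ∫ t, (w t)⁻¹ ∂μ := by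
  have hquad : ∀ s : ℝ, 0 ≤ (∫ t, w t * f t ^ 2 ∂μ) * (s * s) + (2 * ∫ t, f t ∂μ) * s
      + ∫ t, (w t)⁻¹ ∂μ := by
    intro s
    have hnonneg : 0 ≤ ∫ t, ((s * s) * (w t * f t ^ 2) + (2 * s) * f t + (w t)⁻¹) ∂μ := by
      refine integral_nonneg_of_ae (hw.mono fun t ht => ?_)
      have hsq : (s * s) * (w t * f t ^ 2) + (2 * s) * f t + (w t)⁻¹
          = (s * w t * f t + 1) ^ 2 / w t := by
        field_simp
        ring
      simp only [Pi.zero_apply, hsq]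
      positivity
    have hlin : Integrable (fun t => (s * s) * (w t * f t ^ 2) + (2 * s) * f t) μ :=
      (hwf.const_mul _).add (hf.const_mul _)
    rw [integral_add hlin hw_inv, integral_add (hwf.const_mul _) (hf.const_mul _),
      integral_const_mul, integral_const_mul] at hnonneg
    linarith
  have hdisc := discrim_le_zero hquad
  rw [discrim] at hdisc
  nlinarith

theorem integral_inv_one_sub_sq_le_log {x y : ℝ} (hx : -1 < x) (hxy : x ≤ y) (hy : y ≤ 0) :
    ∫ t in x..y, (1 - t ^ 2)⁻¹ ≤ Real.log ((y + 1) / (x + 1)) := by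
  have hpos : ∀ t ∈ Icc x y, 0 < t + 1 := fun t ht => by linarith [ht.1]
  have hle : ∀ t ∈ Icc x y, t + 1 ≤ 1 - t ^ 2 := fun t ht => by nlinarith [ht.1, ht.2]
  have hshift : ∫ t in x..y, (t + 1)⁻¹ = Real.log ((y + 1) / (x + 1)) := by
    rw [intervalIntegral.integral_comp_add_right (fun t => t⁻¹),
      integral_inv_of_pos (by linarith) (by linarith)]
  rw [← hshift]
  refine intervalIntegral.integral_mono_on hxy ?_ ?_ fun t ht => inv_anti₀ (hpos t ht) (hle t ht)
  · exact (ContinuousOn.inv₀ (by fun_prop) fun t ht =>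
      ((hpos t ht).trans_le (hle t ht)).ne').intervalIntegrable_of_Icc hxy
  · exact (ContinuousOn.inv₀ (by fun_prop) fun t ht => (hpos t ht).ne').intervalIntegrable_of_Icc
      hxy

theorem exists_mem_Ioo_le_setIntegral_div {f : ℝ → ℝ} {s : Set ℝ} {a b : ℝ} (hab : a < b)
    (hs : Ioo a b ⊆ s) (hf : IntegrableOn f s) (hf0 : ∀ x, 0 ≤ f x) :
    ∃ y ∈ Ioo a b, f y ≤ (∫ x in s, f x) / (b - a) := by
  have hvol : volume (Ioo a b) = ENNReal.ofReal (b - a) := Real.volume_Ioo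
  obtain ⟨y, hy, hfy⟩ := exists_le_setAverage (μ := volume)
    (by simp [hvol, hab]) (by simp [hvol]) (hf.mono_set hs)
  refine ⟨y, hy, hfy.trans ?_⟩
  rw [setAverage_eq, smul_eq_mul, measureReal_def, hvol, ENNReal.toReal_ofReal (by linarith),
    inv_mul_eq_div]
  refine div_le_div_of_nonneg_right ?_ (by linarith)
  exact setIntegral_mono_set hf (Eventually.of_forall hf0) hs.eventuallyLE

theorem one_sub_sq_pos_of_mem_Ioo {t : ℝ} (ht : t ∈ Ioo (-1:ℝ) 1) : 0 < 1 - t ^ 2 := by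
  nlinarith [ht.1, ht.2]

theorem setIntegral_one_sub_sq_mul_sq_nonneg (f : ℝ → ℝ) :
    0 ≤ ∫ t in Ioo (-1:ℝ) 0, (1 - t ^ 2) * f t ^ 2 :=
  setIntegral_nonneg measurableSet_Ioo fun t ht =>
    mul_nonneg (one_sub_sq_pos_of_mem_Ioo ⟨ht.1, by linarith [ht.2]⟩).le (sq_nonneg _)

theorem div_one_sub_sq_rpow_le {a x c γ : ℝ} (ha : 0 ≤ a) (hc : 0 < c) (hcx : c ≤ x + 1)
    (hx : x ≤ 0) (hγ : 0 ≤ γ) : a / (1 - x ^ 2) ^ γ ≤ c ^ (-γ) * a := by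
  rw [Real.rpow_neg hc.le, inv_mul_eq_div]
  exact div_le_div_of_nonneg_left ha (Real.rpow_pos_of_pos hc γ)
    (Real.rpow_le_rpow hc.le (by nlinarith) hγ)

theorem integrableOn_add_one_rpow {e : ℝ} (he : -1 < e) (c : ℝ) :
    IntegrableOn (fun x : ℝ => (x + 1) ^ e) (Ioo (-1) c) := by
  rcases le_or_gt c (-1) with hc | hc
  · simp [Ioo_eq_empty_of_le hc]
  have h := (intervalIntegral.intervalIntegrable_rpow' he (a := 0) (b := c + 1)).comp_add_right 1
  rw [zero_sub, add_sub_cancel_right, intervalIntegrable_iff_integrableOn_Ioo_of_le hc.le] at h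
  exact h

theorem setIntegral_add_one_rpow_le {e c : ℝ} (he : -1 < e) (hc : -1 ≤ c) (hc0 : c ≤ 0) :
    ∫ x in Ioo (-1) c, (x + 1) ^ e ≤ 1 / (e + 1) := by
  rw [integral_Ioc_eq_integral_Ioo.symm, ← intervalIntegral.integral_of_le hc,
    intervalIntegral.integral_comp_add_right (fun x => x ^ e), integral_rpow (Or.inl he),
    neg_add_cancel, Real.zero_rpow (by linarith), sub_zero]
  exact div_le_div_of_nonneg_right (Real.rpow_le_one (by linarith) (by linarith) (by linarith))
    (by linarith)

theorem exists_pos_le_mul_rpow_two_mul_le {c β ε r : ℝ} (hβ : 0 < β) (hε : 0 < ε)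
    (hr : 0 < r) : ∃ δ, 0 < δ ∧ δ ≤ r ∧ c * (2 * δ) ^ β ≤ ε := by
  have hlim : Tendsto (fun δ : ℝ => c * (2 * δ) ^ β) (𝓝[>] 0) (𝓝 0) := by
    have hcont : ContinuousAt (fun δ : ℝ => c * (2 * δ) ^ β) 0 := by
      fun_prop (disch := positivity)
    simpa [Real.zero_rpow hβ.ne'] using hcont.tendsto.mono_left nhdsWithin_le_nhds
  obtain ⟨δ, ⟨hδε, hδ⟩, hδ0⟩ := ((hlim.eventually (ge_mem_nhds hε)).and
    ((ge_mem_nhds hr).filter_mono nhdsWithin_le_nhds)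
    |>.and self_mem_nhdsWithin).exists
  exact ⟨δ, hδ0, hδ, hδε⟩

namespace MemV

variable {u u' : ℝ → ℝ}

theorem sq_sub_le_mul_log (hu : MemV u u') {x y : ℝ} (hx : -1 < x) (hxy : x ≤ y) (hy : y < 0) :
    (u y - u x) ^ 2
      ≤ (∫ t in Ioo (-1:ℝ) 0, (1 - t ^ 2) * u' t ^ 2) * Real.log ((y + 1) / (x + 1)) := by
  have hxI : x ∈ Ioo (-1:ℝ) 1 := ⟨hx, by linarith⟩
  have hyI : y ∈ Ioo (-1:ℝ) 1 := ⟨by linarith, by linarith⟩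
  have hsubI : Ioo (-1:ℝ) 0 ⊆ Ioo (-1) 1 := Ioo_subset_Ioo_right zero_le_one
  have hsub : Ioc x y ⊆ Ioo (-1:ℝ) 0 := fun t ht => ⟨by linarith [ht.1], by linarith [ht.2]⟩
  have hw : ∀ t ∈ Icc x y, 0 < 1 - t ^ 2 := fun t ht =>
    one_sub_sq_pos_of_mem_Ioo ⟨by linarith [ht.1], by linarith [ht.2]⟩
  have hw_inv : IntegrableOn (fun t => (1 - t ^ 2)⁻¹) (Ioc x y) :=
    (ContinuousOn.inv₀ (by fun_prop) fun t ht => (hw t ht).ne').integrableOn_Icc.mono_set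
      Ioc_subset_Icc_self
  have hlog := integral_inv_one_sub_sq_le_log hx hxy hy.le
  rw [intervalIntegral.integral_of_le hxy] at hlog
  rw [hu.locAC x y hxI hyI, intervalIntegral.integral_of_le hxy]
  calc (∫ t in Ioc x y, u' t) ^ 2
      ≤ (∫ t in Ioc x y, (1 - t ^ 2) * u' t ^ 2) * ∫ t in Ioc x y, (1 - t ^ 2)⁻¹ :=
        sq_integral_le_integral_mul_sq_mul_integral_inv
          ((ae_restrict_iff' measurableSet_Ioc).2
            (.of_forall fun t ht => hw t (Ioc_subset_Icc_self ht)))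
          ((intervalIntegrable_iff_integrableOn_Ioc_of_le hxy).1 (hu.deriv_intble x y hxI hyI))
          (hu.wsq_int.mono_set (hsub.trans hsubI)) hw_inv
    _ ≤ _ := by
      refine mul_le_mul ?_ hlog ?_ (setIntegral_one_sub_sq_mul_sq_nonneg u')
      · refine setIntegral_mono_set (hu.wsq_int.mono_set hsubI) ?_ hsub.eventuallyLE
        exact (ae_restrict_iff' measurableSet_Ioo).2 (.of_forall fun t ht =>
          mul_nonneg (one_sub_sq_pos_of_mem_Ioo (hsubI ht)).le (sq_nonneg _))
      · exact setIntegral_nonneg measurableSet_Ioc fun t ht =>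
          (inv_pos.2 (hw t (Ioc_subset_Icc_self ht))).le

theorem sq_le_of_le_neg_one_add (hu : MemV u u') {β δ x : ℝ} (hβ : 0 < β) (hδ0 : 0 < δ)
    (hδ : δ ≤ 1 / 2) (hx : -1 < x) (hxδ : x ≤ -1 + δ) :
    u x ^ 2 ≤ 2 / δ * (∫ t in Ioo (-1:ℝ) 0, u t ^ 2)
      + 2 * (2 * δ) ^ β / β * (∫ t in Ioo (-1:ℝ) 0, (1 - t ^ 2) * u' t ^ 2) * (x + 1) ^ (-β) := by
  obtain ⟨y, hy, huy⟩ := exists_mem_Ioo_le_setIntegral_div (f := fun t => u t ^ 2)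
    (by linarith : -1 + δ < -1 + 2 * δ) (Ioo_subset_Ioo (by linarith) (by linarith))
    (hu.sq_int.mono_set (Ioo_subset_Ioo_right zero_le_one)) fun t => sq_nonneg (u t)
  rw [show -1 + 2 * δ - (-1 + δ) = δ by ring] at huy
  set A := ∫ t in Ioo (-1:ℝ) 0, u t ^ 2
  set D := ∫ t in Ioo (-1:ℝ) 0, (1 - t ^ 2) * u' t ^ 2
  have hD : 0 ≤ D := setIntegral_one_sub_sq_mul_sq_nonneg u'
  have hx1 : 0 < x + 1 := by linarith
  have hlog : Real.log ((y + 1) / (x + 1)) ≤ (2 * δ) ^ β / β * (x + 1) ^ (-β) := by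
    calc Real.log ((y + 1) / (x + 1)) ≤ ((y + 1) / (x + 1)) ^ β / β :=
          Real.log_le_rpow_div (div_nonneg (by linarith [hy.1]) hx1.le) hβ
      _ = (y + 1) ^ β / β * (x + 1) ^ (-β) := by
          rw [Real.div_rpow (by linarith [hy.1]) hx1.le, Real.rpow_neg hx1.le]
          ring
      _ ≤ (2 * δ) ^ β / β * (x + 1) ^ (-β) := by
          gcongr
          · linarith [hy.1]
          · linarith [hy.2]
  have hdiff := hu.sq_sub_le_mul_log (y := y) hx (by linarith [hy.1]) (by linarith [hy.2])
  calc u x ^ 2 ≤ 2 * u y ^ 2 + 2 * (u y - u x) ^ 2 := by nlinarith [sq_nonneg (u y + (u y - u x))]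
    _ ≤ 2 * (A / δ) + 2 * (D * ((2 * δ) ^ β / β * (x + 1) ^ (-β))) := by
        gcongr
        exact hdiff.trans (mul_le_mul_of_nonneg_left hlog hD)
    _ = _ := by ring

theorem sq_div_rpow_le (hu : MemV u u') {β γ δ x : ℝ} (hβ : 0 < β) (hγ : 0 ≤ γ) (hδ0 : 0 < δ)
    (hδ : δ ≤ 1 / 2) (hx : -1 < x) (hx0 : x ≤ 0) :
    u x ^ 2 / (1 - x ^ 2) ^ γ ≤ δ ^ (-γ) * u x ^ 2
      + 2 / δ * (∫ t in Ioo (-1:ℝ) 0, u t ^ 2) * (x + 1) ^ (-γ)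
      + 2 * (2 * δ) ^ β / β * (∫ t in Ioo (-1:ℝ) 0, (1 - t ^ 2) * u' t ^ 2)
        * (x + 1) ^ (-(γ + β)) := by
  set A := ∫ t in Ioo (-1:ℝ) 0, u t ^ 2
  set D := ∫ t in Ioo (-1:ℝ) 0, (1 - t ^ 2) * u' t ^ 2
  have hx1 : 0 < x + 1 := by linarith
  have hA : 0 ≤ A := setIntegral_nonneg measurableSet_Ioo fun t _ => sq_nonneg (u t)
  have hD : 0 ≤ D := setIntegral_one_sub_sq_mul_sq_nonneg u'
  have hγx : 0 ≤ (x + 1) ^ (-γ) := Real.rpow_nonneg hx1.le _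
  have hγβx : 0 ≤ (x + 1) ^ (-(γ + β)) := Real.rpow_nonneg hx1.le _
  rcases le_or_gt x (-1 + δ) with hxδ | hxδ
  · have hux := hu.sq_le_of_le_neg_one_add hβ hδ0 hδ hx hxδ
    calc u x ^ 2 / (1 - x ^ 2) ^ γ ≤ (x + 1) ^ (-γ) * u x ^ 2 :=
          div_one_sub_sq_rpow_le (sq_nonneg _) hx1 le_rfl hx0 hγ
      _ ≤ (x + 1) ^ (-γ) * (2 / δ * A + 2 * (2 * δ) ^ β / β * D * (x + 1) ^ (-β)) := by gcongr
      _ = 2 / δ * A * (x + 1) ^ (-γ) + 2 * (2 * δ) ^ β / β * D * (x + 1) ^ (-(γ + β)) := by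
          rw [neg_add, Real.rpow_add hx1]
          ring
      _ ≤ _ := by
          have := mul_nonneg (Real.rpow_nonneg hδ0.le (-γ)) (sq_nonneg (u x))
          linarith
  · have := div_one_sub_sq_rpow_le (sq_nonneg (u x)) hδ0 (by linarith) hx0 hγ
    have : 0 ≤ 2 / δ * A * (x + 1) ^ (-γ) := by positivity
    have : 0 ≤ 2 * (2 * δ) ^ β / β * D * (x + 1) ^ (-(γ + β)) := by positivity
    linarith

theorem setIntegral_sq_div_rpow_le (hu : MemV u u') {β γ δ c : ℝ} (hβ : 0 < β) (hγ : 0 ≤ γ)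
    (hγβ : γ + β < 1) (hδ0 : 0 < δ) (hδ : δ ≤ 1 / 2) (hc : -1 ≤ c) (hc0 : c ≤ 0) :
    ∫ x in Ioo (-1:ℝ) c, u x ^ 2 / (1 - x ^ 2) ^ γ
      ≤ (δ ^ (-γ) + 2 / (δ * (1 - γ))) * (∫ x in Ioo (-1:ℝ) 0, u x ^ 2)
        + 2 * (2 * δ) ^ β / (β * (1 - (γ + β)))
          * ∫ x in Ioo (-1:ℝ) 0, (1 - x ^ 2) * u' x ^ 2 := by
  set A := ∫ x in Ioo (-1:ℝ) 0, u x ^ 2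
  set D := ∫ x in Ioo (-1:ℝ) 0, (1 - x ^ 2) * u' x ^ 2
  have hhalf : Ioo (-1:ℝ) c ⊆ Ioo (-1) 0 := Ioo_subset_Ioo_right hc0
  have hu0 : IntegrableOn (fun x => u x ^ 2) (Ioo (-1:ℝ) 0) :=
    hu.sq_int.mono_set (Ioo_subset_Ioo_right zero_le_one)
  have hγ1 := integrableOn_add_one_rpow (by linarith : -1 < -γ) c
  have hγβ1 := integrableOn_add_one_rpow (by linarith : -1 < -(γ + β)) c
  have hpart : IntegrableOn (fun x => δ ^ (-γ) * u x ^ 2 + 2 / δ * A * (x + 1) ^ (-γ))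
      (Ioo (-1:ℝ) c) := ((hu0.mono_set hhalf).const_mul _).add (hγ1.const_mul _)
  calc ∫ x in Ioo (-1:ℝ) c, u x ^ 2 / (1 - x ^ 2) ^ γ
      ≤ ∫ x in Ioo (-1:ℝ) c, (δ ^ (-γ) * u x ^ 2 + 2 / δ * A * (x + 1) ^ (-γ)
          + 2 * (2 * δ) ^ β / β * D * (x + 1) ^ (-(γ + β))) := by
        refine integral_mono_of_nonneg ?_ (hpart.add (hγβ1.const_mul _)) ?_ <;>
          refine (ae_restrict_iff' measurableSet_Ioo).2 (Eventually.of_forall fun x hx => ?_)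
        · have hx' : x ∈ Ioo (-1:ℝ) 1 := ⟨hx.1, by linarith [hx.2]⟩
          exact div_nonneg (sq_nonneg _) (Real.rpow_nonneg (one_sub_sq_pos_of_mem_Ioo hx').le _)
        · exact hu.sq_div_rpow_le hβ hγ hδ0 hδ hx.1 (by linarith [hx.2])
    _ = δ ^ (-γ) * (∫ x in Ioo (-1:ℝ) c, u x ^ 2)
          + 2 / δ * A * (∫ x in Ioo (-1:ℝ) c, (x + 1) ^ (-γ))
          + 2 * (2 * δ) ^ β / β * D * ∫ x in Ioo (-1:ℝ) c, (x + 1) ^ (-(γ + β)) := by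
        rw [integral_add hpart (hγβ1.const_mul _), integral_add ((hu0.mono_set hhalf).const_mul _)
          (hγ1.const_mul _), integral_const_mul, integral_const_mul, integral_const_mul]
    _ ≤ δ ^ (-γ) * A + 2 / δ * A * (1 / (-γ + 1))
          + 2 * (2 * δ) ^ β / β * D * (1 / (-(γ + β) + 1)) := by
        have hA : 0 ≤ A := setIntegral_nonneg measurableSet_Ioo fun t _ => sq_nonneg (u t)
        have hD : 0 ≤ D := setIntegral_one_sub_sq_mul_sq_nonneg u'
        gcongr
        · exact setIntegral_mono_set hu0 (Eventually.of_forall fun x => sq_nonneg _)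
            hhalf.eventuallyLE
        · exact setIntegral_add_one_rpow_le (by linarith) hc hc0
        · exact setIntegral_add_one_rpow_le (by linarith) hc hc0
    _ = _ := by
        field_simp
        ring

end MemV

/-- Half-interval Hardy-type estimate. -/
theorem half_interval_hardy (n : ℝ) (hn : 0 < n) (γ : ℝ) (hγ : γ ∈ Ioo (0:ℝ) 1) :
    ∃ C : ℝ, 0 < C ∧ ∀ u u' : ℝ → ℝ, MemV u u' →
      n * ∫ x in Ioo (-1:ℝ) (-1/2), u x ^ 2 / (1 - x ^ 2) ^ γ
        ≤ C * (∫ x in Ioo (-1:ℝ) 0, u x ^ 2)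
          + ∫ x in Ioo (-1:ℝ) 0, (1 - x ^ 2) * u' x ^ 2 := by
  obtain ⟨hγ0, hγ1⟩ := hγ
  set β := (1 - γ) / 2 with hβ_def
  have hβ : 0 < β := by linarith
  obtain ⟨δ, hδ0, hδ, hδn⟩ :=
    exists_pos_le_mul_rpow_two_mul_le (c := 2 * n) hβ (pow_pos hβ 2) (by norm_num : (0:ℝ) < 1 / 2)
  refine ⟨n * (δ ^ (-γ) + 2 / (δ * (1 - γ))) + 1, ?_, fun u u' hu => ?_⟩
  · have : 0 < 1 - γ := by linarith
    positivity
  have hA : 0 ≤ ∫ x in Ioo (-1:ℝ) 0, u x ^ 2 :=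
    setIntegral_nonneg measurableSet_Ioo fun t _ => sq_nonneg (u t)
  have hD := setIntegral_one_sub_sq_mul_sq_nonneg u'
  have hint := hu.setIntegral_sq_div_rpow_le (c := -1/2) hβ hγ0.le (by linarith) hδ0 hδ
    (by norm_num) (by norm_num)
  rw [show 1 - (γ + β) = β by ring] at hint
  calc n * ∫ x in Ioo (-1:ℝ) (-1/2), u x ^ 2 / (1 - x ^ 2) ^ γ
      ≤ n * (δ ^ (-γ) + 2 / (δ * (1 - γ))) * (∫ x in Ioo (-1:ℝ) 0, u x ^ 2)
        + 2 * n * (2 * δ) ^ β / β ^ 2 * ∫ x in Ioo (-1:ℝ) 0, (1 - x ^ 2) * u' x ^ 2 := by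
        refine (mul_le_mul_of_nonneg_left hint hn.le).trans_eq ?_
        field_simp
    _ ≤ _ := by
        gcongr ?_ + ?_
        · linarith
        · exact mul_le_of_le_one_left hD ((div_le_one (by positivity)).2 hδn)
end
end

section
/- (Hardy inequality with weight (1−x²)^{−2}) There exists a constant C>0 such that for every absolutely continuous function w:[−1,1]→ℝ with w(−1)=w(1)=0 whose a.e. derivative w′ belongs to L²(−1,1), one has ∫_{−1}^{1} w(x)²/(1−x²)² dx ≤ C·∫_{−1}^{1} w′(x)² dx. -/
/-!
For `g ≥ 0`, Cauchy–Schwarz with the weight `(t - a) ^ (1/2)` gives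
`(∫_a^x g)² ≤ 2 (x - a) ^ (1/2) ∫_a^x (t - a) ^ (1/2) g(t)² dt`; dividing by `(x - a)²`,
integrating in `x` and exchanging the integrals, the inner integral `∫_t^∞ (x - a) ^ (-3/2) dx`
equals `2 (t - a) ^ (-1/2)` and cancels the weight. This is Hardy's inequality
`∫_a^b (∫_a^x g)² / (x - a)² ≤ 4 ∫_a^b g²`, and working in `ℝ≥0∞` makes it free of integrability
side conditions. For `w` vanishing at `±1`, `|w x|` is bounded by the integral of `|w'|` from
either endpoint, and `2 / (1 - x²)² ≤ 1 / (1 + x)² + 1 / (1 - x)²`, so the two one-sided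
inequalities give the claim with `C = 4`.
-/

open MeasureTheory Set
open scoped ENNReal

theorem lintegral_sq_le_lintegral_inv_mul_lintegral_mul_sq {α : Type*} [MeasurableSpace α]
    {μ : Measure α} {φ g : α → ℝ≥0∞} (hφ : AEMeasurable φ μ) (hg : AEMeasurable g μ)
    (hφ₀ : ∀ᵐ a ∂μ, φ a ≠ 0) (hφ_top : ∀ᵐ a ∂μ, φ a ≠ ∞) :
    (∫⁻ a, g a ∂μ) ^ 2 ≤ (∫⁻ a, (φ a)⁻¹ ∂μ) * ∫⁻ a, φ a * g a ^ 2 ∂μ := by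
  have hsplit : (fun a => g a) =ᵐ[μ]
      fun a => (φ a)⁻¹ ^ (2⁻¹ : ℝ) * (φ a * g a ^ 2) ^ (2⁻¹ : ℝ) := by
    filter_upwards [hφ₀, hφ_top] with a h₀ h_top
    rw [← ENNReal.mul_rpow_of_nonneg _ _ (by norm_num), ← mul_assoc,
      ENNReal.inv_mul_cancel h₀ h_top, one_mul, ← ENNReal.rpow_natCast, ← ENNReal.rpow_mul]
    norm_num
  have hHolder := ENNReal.lintegral_mul_norm_pow_le (f := fun a => (φ a)⁻¹)
    (g := fun a => φ a * g a ^ 2) hφ.inv (hφ.mul (hg.pow_const 2))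
    (by norm_num : (0 : ℝ) ≤ 2⁻¹) (by norm_num : (0 : ℝ) ≤ 2⁻¹) (by norm_num)
  rw [← lintegral_congr_ae hsplit] at hHolder
  calc (∫⁻ a, g a ∂μ) ^ 2
      ≤ ((∫⁻ a, (φ a)⁻¹ ∂μ) ^ (2⁻¹ : ℝ) * (∫⁻ a, φ a * g a ^ 2 ∂μ) ^ (2⁻¹ : ℝ)) ^ 2 := by
        gcongr
    _ = (∫⁻ a, (φ a)⁻¹ ∂μ) * ∫⁻ a, φ a * g a ^ 2 ∂μ := by
        rw [mul_pow, ← ENNReal.rpow_natCast, ← ENNReal.rpow_natCast, ← ENNReal.rpow_mul,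
          ← ENNReal.rpow_mul]
        norm_num

theorem lintegral_Ioo_mul_lintegral_Ioo_swap {f g : ℝ → ℝ≥0∞} (hf : Measurable f)
    (hg : Measurable g) (a b : ℝ) :
    ∫⁻ x in Ioo a b, f x * ∫⁻ t in Ioo a x, g t
      = ∫⁻ t in Ioo a b, g t * ∫⁻ x in Ioo t b, f x := by
  set F : ℝ × ℝ → ℝ≥0∞ := {p | p.2 < p.1}.indicator fun p => f p.1 * g p.2
  have hF : Measurable F :=
    ((hf.comp measurable_fst).mul (hg.comp measurable_snd)).indicator
      (measurableSet_lt measurable_snd measurable_fst)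
  have hx : ∀ x ∈ Ioo a b, f x * ∫⁻ t in Ioo a x, g t = ∫⁻ t in Ioo a b, F (x, t) := by
    intro x hx
    have hIoo : Ioo a x = Iio x ∩ Ioo a b := by rw [Iio_inter_Ioo, min_eq_left hx.2.le]
    rw [← lintegral_const_mul _ hg, hIoo, ← Measure.restrict_restrict measurableSet_Iio,
      ← lintegral_indicator measurableSet_Iio]
    rfl
  have ht : ∀ t ∈ Ioo a b, g t * ∫⁻ x in Ioo t b, f x = ∫⁻ x in Ioo a b, F (x, t) := by
    intro t ht
    have hIoo : Ioo t b = Ioi t ∩ Ioo a b := by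
      rw [← Ioi_inter_Iio, ← Ioi_inter_Iio, ← inter_assoc, Ioi_inter_Ioi, max_eq_left ht.1.le]
    rw [← lintegral_const_mul _ hf, hIoo, ← Measure.restrict_restrict measurableSet_Ioi,
      ← lintegral_indicator measurableSet_Ioi]
    simp_rw [mul_comm (g t)]
    rfl
  rw [setLIntegral_congr_fun measurableSet_Ioo hx, setLIntegral_congr_fun measurableSet_Ioo ht]
  exact lintegral_lintegral_swap hF.aemeasurable

theorem setLIntegral_comp_sub_right (f : ℝ → ℝ≥0∞) (s : Set ℝ) (a : ℝ) :
    ∫⁻ x in (fun x => x - a) ⁻¹' s, f (x - a) = ∫⁻ y in s, f y :=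
  (measurePreserving_sub_right volume a).setLIntegral_comp_preimage_emb
    (MeasurableEquiv.subRight a).measurableEmbedding f s

theorem setLIntegral_comp_neg (f : ℝ → ℝ≥0∞) (s : Set ℝ) :
    ∫⁻ x in Neg.neg ⁻¹' s, f (-x) = ∫⁻ y in s, f y :=
  (Measure.measurePreserving_neg volume).setLIntegral_comp_preimage_emb measurableEmbedding_neg f s

theorem lintegral_Ioo_sub_rpow {a x r : ℝ} (hax : a ≤ x) (hr : -1 < r) :
    ∫⁻ t in Ioo a x, ENNReal.ofReal ((t - a) ^ r)
      = ENNReal.ofReal ((x - a) ^ (r + 1) / (r + 1)) := by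
  have h := setLIntegral_comp_sub_right (fun y => ENNReal.ofReal (y ^ r)) (Ioo 0 (x - a)) a
  rw [preimage_sub_const_Ioo, zero_add, sub_add_cancel] at h
  rw [h, ← ofReal_integral_eq_lintegral_ofReal, ← integral_Ioc_eq_integral_Ioo,
    ← intervalIntegral.integral_of_le (sub_nonneg.2 hax), integral_rpow (Or.inl hr),
    Real.zero_rpow (by linarith), sub_zero]
  · exact (intervalIntegral.intervalIntegrable_rpow' hr).1.mono_set Ioo_subset_Ioc_self
  · exact (ae_restrict_iff' measurableSet_Ioo).2
      (ae_of_all _ fun y hy => Real.rpow_nonneg hy.1.le _)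

theorem lintegral_Ioi_sub_rpow {a t r : ℝ} (hat : a < t) (hr : r < -1) :
    ∫⁻ x in Ioi t, ENNReal.ofReal ((x - a) ^ r)
      = ENNReal.ofReal (-(t - a) ^ (r + 1) / (r + 1)) := by
  have h := setLIntegral_comp_sub_right (fun y => ENNReal.ofReal (y ^ r)) (Ioi (t - a)) a
  rw [preimage_sub_const_Ioi, sub_add_cancel] at h
  rw [h, ← ofReal_integral_eq_lintegral_ofReal (integrableOn_Ioi_rpow_of_lt hr (sub_pos.2 hat)),
    integral_Ioi_rpow_of_lt hr (sub_pos.2 hat)]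
  exact (ae_restrict_iff' measurableSet_Ioi).2
    (ae_of_all _ fun y hy => Real.rpow_nonneg ((sub_pos.2 hat).trans hy).le _)

theorem sq_lintegral_Ioo_div_sq_le {g : ℝ → ℝ≥0∞} {a x : ℝ} (hax : a < x)
    (hg : AEMeasurable g (volume.restrict (Ioo a x))) :
    (∫⁻ t in Ioo a x, g t) ^ 2 / ENNReal.ofReal ((x - a) ^ 2)
      ≤ 2 * (ENNReal.ofReal ((x - a) ^ (-(3 / 2) : ℝ))
        * ∫⁻ t in Ioo a x, ENNReal.ofReal ((t - a) ^ (1 / 2 : ℝ)) * g t ^ 2) := by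
  have hxa : 0 < x - a := sub_pos.2 hax
  have hCS := lintegral_sq_le_lintegral_inv_mul_lintegral_mul_sq
    (φ := fun t => ENNReal.ofReal ((t - a) ^ (1 / 2 : ℝ))) (by fun_prop) hg
    ((ae_restrict_iff' measurableSet_Ioo).2 (ae_of_all _ fun t ht =>
      (ENNReal.ofReal_pos.2 (Real.rpow_pos_of_pos (sub_pos.2 ht.1) _)).ne'))
    (ae_of_all _ fun _ => ENNReal.ofReal_ne_top)
  have hinv : ∫⁻ t in Ioo a x, (ENNReal.ofReal ((t - a) ^ (1 / 2 : ℝ)))⁻¹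
      = ENNReal.ofReal (2 * (x - a) ^ (1 / 2 : ℝ)) := by
    have hpoint : EqOn (fun t => (ENNReal.ofReal ((t - a) ^ (1 / 2 : ℝ)))⁻¹)
        (fun t => ENNReal.ofReal ((t - a) ^ (-(1 / 2) : ℝ))) (Ioo a x) := fun t ht => by
      dsimp only
      rw [Real.rpow_neg (sub_pos.2 ht.1).le,
        ENNReal.ofReal_inv_of_pos (Real.rpow_pos_of_pos (sub_pos.2 ht.1) _)]
    rw [setLIntegral_congr_fun measurableSet_Ioo hpoint,
      lintegral_Ioo_sub_rpow hax.le (by norm_num)]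
    congr 1
    norm_num
    ring
  have hweight : ENNReal.ofReal (2 * (x - a) ^ (1 / 2 : ℝ))
      = 2 * ENNReal.ofReal ((x - a) ^ (-(3 / 2) : ℝ)) * ENNReal.ofReal ((x - a) ^ 2) := by
    rw [← ENNReal.ofReal_ofNat 2, ← ENNReal.ofReal_mul zero_le_two,
      ← ENNReal.ofReal_mul (by positivity), mul_assoc, ← Real.rpow_natCast,
      ← Real.rpow_add hxa]
    norm_num
  refine ENNReal.div_le_of_le_mul ?_
  rw [hinv, hweight] at hCS
  exact hCS.trans_eq (by ring)

theorem lintegral_Ioo_sub_rpow_neg_three_halves_le {a b t : ℝ} (hat : a < t) :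
    ∫⁻ x in Ioo t b, ENNReal.ofReal ((x - a) ^ (-(3 / 2) : ℝ))
      ≤ ENNReal.ofReal (2 * (t - a) ^ (-(1 / 2) : ℝ)) := by
  calc ∫⁻ x in Ioo t b, ENNReal.ofReal ((x - a) ^ (-(3 / 2) : ℝ))
      ≤ ∫⁻ x in Ioi t, ENNReal.ofReal ((x - a) ^ (-(3 / 2) : ℝ)) :=
        lintegral_mono_set Ioo_subset_Ioi_self
    _ = ENNReal.ofReal (2 * (t - a) ^ (-(1 / 2) : ℝ)) := by
        rw [lintegral_Ioi_sub_rpow hat (by norm_num)]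
        congr 1
        norm_num
        ring

theorem hardy_inequality_left_of_measurable {g : ℝ → ℝ≥0∞} (hg : Measurable g) (a b : ℝ) :
    ∫⁻ x in Ioo a b, (∫⁻ t in Ioo a x, g t) ^ 2 / ENNReal.ofReal ((x - a) ^ 2)
      ≤ 4 * ∫⁻ t in Ioo a b, g t ^ 2 := by
  set φ : ℝ → ℝ≥0∞ := fun t => ENNReal.ofReal ((t - a) ^ (1 / 2 : ℝ))
  set ψ : ℝ → ℝ≥0∞ := fun x => ENNReal.ofReal ((x - a) ^ (-(3 / 2) : ℝ))
  have tail : ∀ t ∈ Ioo a b, φ t * g t ^ 2 * ∫⁻ x in Ioo t b, ψ x ≤ 2 * g t ^ 2 := by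
    intro t ht
    have hta : 0 < t - a := sub_pos.2 ht.1
    have hφ_mul : φ t * ENNReal.ofReal (2 * (t - a) ^ (-(1 / 2) : ℝ)) = 2 := by
      rw [← ENNReal.ofReal_mul (by positivity), mul_left_comm, ← Real.rpow_add hta]
      norm_num
    calc φ t * g t ^ 2 * ∫⁻ x in Ioo t b, ψ x
        ≤ φ t * g t ^ 2 * ENNReal.ofReal (2 * (t - a) ^ (-(1 / 2) : ℝ)) := by
          gcongr
          exact lintegral_Ioo_sub_rpow_neg_three_halves_le ht.1
      _ = 2 * g t ^ 2 := by rw [mul_right_comm, hφ_mul]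
  calc ∫⁻ x in Ioo a b, (∫⁻ t in Ioo a x, g t) ^ 2 / ENNReal.ofReal ((x - a) ^ 2)
      ≤ ∫⁻ x in Ioo a b, 2 * (ψ x * ∫⁻ t in Ioo a x, φ t * g t ^ 2) :=
        setLIntegral_mono' measurableSet_Ioo fun x hx =>
          sq_lintegral_Ioo_div_sq_le hx.1 hg.aemeasurable
    _ = 2 * ∫⁻ t in Ioo a b, φ t * g t ^ 2 * ∫⁻ x in Ioo t b, ψ x := by
        rw [lintegral_const_mul' _ _ ENNReal.ofNat_ne_top,
          lintegral_Ioo_mul_lintegral_Ioo_swap (by fun_prop) (by fun_prop)]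
    _ ≤ 2 * ∫⁻ t in Ioo a b, 2 * g t ^ 2 := by
        gcongr 2 * ?_
        exact setLIntegral_mono' measurableSet_Ioo tail
    _ = 4 * ∫⁻ t in Ioo a b, g t ^ 2 := by
        rw [lintegral_const_mul' _ _ ENNReal.ofNat_ne_top, ← mul_assoc]
        norm_num

theorem hardy_inequality_left {g : ℝ → ℝ≥0∞} {a b : ℝ}
    (hg : AEMeasurable g (volume.restrict (Ioo a b))) :
    ∫⁻ x in Ioo a b, (∫⁻ t in Ioo a x, g t) ^ 2 / ENNReal.ofReal ((x - a) ^ 2)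
      ≤ 4 * ∫⁻ t in Ioo a b, g t ^ 2 := by
  have hprim : ∀ x ∈ Ioo a b, ∫⁻ t in Ioo a x, g t = ∫⁻ t in Ioo a x, hg.mk g t := fun x hx =>
    lintegral_congr_ae (ae_restrict_of_ae_restrict_of_subset (Ioo_subset_Ioo_right hx.2.le)
      hg.ae_eq_mk)
  calc ∫⁻ x in Ioo a b, (∫⁻ t in Ioo a x, g t) ^ 2 / ENNReal.ofReal ((x - a) ^ 2)
      = ∫⁻ x in Ioo a b, (∫⁻ t in Ioo a x, hg.mk g t) ^ 2 / ENNReal.ofReal ((x - a) ^ 2) :=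
        setLIntegral_congr_fun measurableSet_Ioo fun x hx => by rw [hprim x hx]
    _ ≤ 4 * ∫⁻ t in Ioo a b, hg.mk g t ^ 2 :=
        hardy_inequality_left_of_measurable hg.measurable_mk a b
    _ = 4 * ∫⁻ t in Ioo a b, g t ^ 2 := by
        congr 1
        exact lintegral_congr_ae (hg.ae_eq_mk.symm.fun_comp (· ^ 2))

theorem hardy_inequality_right {g : ℝ → ℝ≥0∞} {a b : ℝ}
    (hg : AEMeasurable g (volume.restrict (Ioo a b))) :
    ∫⁻ x in Ioo a b, (∫⁻ t in Ioo x b, g t) ^ 2 / ENNReal.ofReal ((b - x) ^ 2)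
      ≤ 4 * ∫⁻ t in Ioo a b, g t ^ 2 := by
  have hpre : ∀ c d : ℝ, (Neg.neg : ℝ → ℝ) ⁻¹' Ioo c d = Ioo (-d) (-c) := fun c d => by simp
  have hg_neg : AEMeasurable (fun t => g (-t)) (volume.restrict (Ioo (-b) (-a))) := by
    rw [← hpre]
    exact ((Measure.measurePreserving_neg volume).restrict_preimage_emb measurableEmbedding_neg
      (Ioo a b)).aemeasurable_comp_iff measurableEmbedding_neg |>.2 hg
  calc ∫⁻ x in Ioo a b, (∫⁻ t in Ioo x b, g t) ^ 2 / ENNReal.ofReal ((b - x) ^ 2)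
      = ∫⁻ x in Ioo (-b) (-a), (∫⁻ t in Ioo (-b) x, g (-t)) ^ 2
          / ENNReal.ofReal ((x - -b) ^ 2) := by
        rw [← setLIntegral_comp_neg _ (Ioo a b), hpre]
        refine setLIntegral_congr_fun measurableSet_Ioo fun x _ => ?_
        rw [← setLIntegral_comp_neg g, hpre, neg_neg]
        ring_nf
    _ ≤ 4 * ∫⁻ t in Ioo (-b) (-a), g (-t) ^ 2 := hardy_inequality_left hg_neg
    _ = 4 * ∫⁻ t in Ioo a b, g t ^ 2 := by
        rw [← hpre, setLIntegral_comp_neg (fun t => g t ^ 2)]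

theorem enorm_intervalIntegral_le_lintegral_Ioo {f : ℝ → ℝ} {a b : ℝ} (hab : a ≤ b) :
    ‖∫ t in a..b, f t‖ₑ ≤ ∫⁻ t in Ioo a b, ‖f t‖ₑ := by
  rw [intervalIntegral.integral_of_le hab, setLIntegral_congr Ioo_ae_eq_Ioc]
  exact enorm_integral_le_lintegral_enorm _

theorem enorm_le_lintegral_Ioo_of_eq_zero_right {w w' : ℝ → ℝ} {a b x : ℝ}
    (hw : ∀ x ∈ Icc a b, w x = ∫ t in a..x, w' t) (hw' : IntervalIntegrable w' volume a b)
    (hwb : w b = 0) (hx : x ∈ Icc a b) :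
    ‖w x‖ₑ ≤ ∫⁻ t in Ioo x b, ‖w' t‖ₑ := by
  have hwx : w x = -∫ t in x..b, w' t := by
    rw [← intervalIntegral.integral_interval_sub_left hw'
      (hw'.mono_set (uIcc_subset_uIcc_left (Icc_subset_uIcc hx))),
      ← hw b (right_mem_Icc.2 (hx.1.trans hx.2)), ← hw x hx, hwb, zero_sub, neg_neg]
  rw [hwx, enorm_neg]
  exact enorm_intervalIntegral_le_lintegral_Ioo hx.2

theorem two_mul_div_one_sub_sq_sq_le {x y : ℝ} (hx : x ∈ Ioo (-1 : ℝ) 1) (hy : 0 ≤ y) :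
    2 * y / (1 - x ^ 2) ^ 2 ≤ y / (x - -1) ^ 2 + y / (1 - x) ^ 2 := by
  have h₁ : 0 < x - -1 := by linarith [hx.1]
  have h₂ : 0 < 1 - x := by linarith [hx.2]
  rw [show 1 - x ^ 2 = (x - -1) * (1 - x) by ring, mul_pow,
    div_add_div _ _ (by positivity) (by positivity), div_le_div_iff_of_pos_right (by positivity)]
  nlinarith [sq_nonneg x]

theorem two_mul_enorm_div_one_sub_sq_sq_le {x y : ℝ} (hx : x ∈ Ioo (-1 : ℝ) 1) :
    2 * ‖y ^ 2 / (1 - x ^ 2) ^ 2‖ₑ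
      ≤ ‖y‖ₑ ^ 2 / ENNReal.ofReal ((x - -1) ^ 2) + ‖y‖ₑ ^ 2 / ENNReal.ofReal ((1 - x) ^ 2) := by
  have hdiv : ∀ c : ℝ, 0 < c → ‖y‖ₑ ^ 2 / ENNReal.ofReal c = ENNReal.ofReal (y ^ 2 / c) :=
    fun c hc => by rw [ENNReal.ofReal_div_of_pos hc, ← enorm_pow, Real.enorm_of_nonneg (sq_nonneg _)]
  rw [hdiv _ (by nlinarith [hx.1]), hdiv _ (by nlinarith [hx.2]),
    ← ENNReal.ofReal_add (by positivity) (by positivity), Real.enorm_of_nonneg (by positivity),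
    ← ENNReal.ofReal_ofNat 2, ← ENNReal.ofReal_mul zero_le_two, ← mul_div_assoc]
  exact ENNReal.ofReal_le_ofReal (two_mul_div_one_sub_sq_sq_le hx (sq_nonneg _))

theorem lintegral_enorm_div_one_sub_sq_sq_le {w w' : ℝ → ℝ}
    (hw : ∀ x ∈ Icc (-1 : ℝ) 1, w x = ∫ t in (-1 : ℝ)..x, w' t)
    (hw' : IntervalIntegrable w' volume (-1) 1) (hw₁ : w 1 = 0) :
    ∫⁻ x in Ioo (-1 : ℝ) 1, ‖w x ^ 2 / (1 - x ^ 2) ^ 2‖ₑ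
      ≤ 4 * ∫⁻ t in Ioo (-1 : ℝ) 1, ‖w' t‖ₑ ^ 2 := by
  set I := ∫⁻ t in Ioo (-1 : ℝ) 1, ‖w' t‖ₑ ^ 2
  have hg : AEMeasurable (fun t => ‖w' t‖ₑ) (volume.restrict (Ioo (-1) 1)) :=
    (hw'.1.mono_set Ioo_subset_Ioc_self).aemeasurable.enorm
  have hpoint : ∀ x ∈ Ioo (-1 : ℝ) 1, 2 * ‖w x ^ 2 / (1 - x ^ 2) ^ 2‖ₑ
      ≤ (∫⁻ t in Ioo (-1) x, ‖w' t‖ₑ) ^ 2 / ENNReal.ofReal ((x - -1) ^ 2)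
        + (∫⁻ t in Ioo x 1, ‖w' t‖ₑ) ^ 2 / ENNReal.ofReal ((1 - x) ^ 2) := by
    intro x hx
    refine (two_mul_enorm_div_one_sub_sq_sq_le hx).trans ?_
    gcongr
    · rw [hw x (Ioo_subset_Icc_self hx)]
      exact enorm_intervalIntegral_le_lintegral_Ioo hx.1.le
    · exact enorm_le_lintegral_Ioo_of_eq_zero_right hw hw' hw₁ (Ioo_subset_Icc_self hx)
  have hprim : Measurable fun x =>
      (∫⁻ t in Ioo (-1) x, ‖w' t‖ₑ) ^ 2 / ENNReal.ofReal ((x - -1) ^ 2) :=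
    ((Monotone.measurable fun _ _ hxy => lintegral_mono_set (Ioo_subset_Ioo_right hxy)).pow_const
      2).div (by fun_prop)
  rw [← ENNReal.mul_le_mul_iff_right two_ne_zero ENNReal.ofNat_ne_top]
  calc 2 * ∫⁻ x in Ioo (-1 : ℝ) 1, ‖w x ^ 2 / (1 - x ^ 2) ^ 2‖ₑ
      = ∫⁻ x in Ioo (-1 : ℝ) 1, 2 * ‖w x ^ 2 / (1 - x ^ 2) ^ 2‖ₑ :=
        (lintegral_const_mul' _ _ ENNReal.ofNat_ne_top).symm
    _ ≤ _ := setLIntegral_mono' measurableSet_Ioo hpoint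
    _ ≤ 4 * I + 4 * I := by
        rw [lintegral_add_left hprim]
        exact add_le_add (hardy_inequality_left hg) (hardy_inequality_right hg)
    _ = 2 * (4 * I) := by ring

theorem integral_le_of_lintegral_enorm_le {α : Type*} [MeasurableSpace α] {μ : Measure α}
    {f : α → ℝ} {c : ℝ} (hc : 0 ≤ c) (h : ∫⁻ a, ‖f a‖ₑ ∂μ ≤ ENNReal.ofReal c) :
    ∫ a, f a ∂μ ≤ c := by
  refine (Real.le_norm_self _).trans ?_
  rw [← ENNReal.ofReal_le_ofReal_iff hc, ofReal_norm]
  exact (enorm_integral_le_lintegral_enorm _).trans h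

/-- Hardy inequality with weight `(1-x²)⁻²`: there is a constant `C > 0` such that every
absolutely continuous `w : [-1,1] → ℝ` with `w(±1) = 0` and a.e. derivative `w' ∈ L²(-1,1)`
satisfies `∫ w²/(1-x²)² ≤ C ∫ w'²`. -/
theorem hardy_weight_inverse_square :
    ∃ C : ℝ, 0 < C ∧ ∀ w w' : ℝ → ℝ,
      (∀ x ∈ Icc (-1:ℝ) 1, w x = ∫ t in (-1:ℝ)..x, w' t) →
      IntervalIntegrable w' volume (-1) 1 →
      w (-1) = 0 → w 1 = 0 →
      IntegrableOn (fun x => w' x ^ 2) (Ioo (-1:ℝ) 1) →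
      ∫ x in Ioo (-1:ℝ) 1, w x ^ 2 / (1 - x ^ 2) ^ 2
        ≤ C * ∫ x in Ioo (-1:ℝ) 1, w' x ^ 2 := by
  refine ⟨4, four_pos, fun w w' hw hw' _ hw₁ hsq => ?_⟩
  have hrhs : ∫⁻ t in Ioo (-1 : ℝ) 1, ‖w' t‖ₑ ^ 2
      = ENNReal.ofReal (∫ t in Ioo (-1 : ℝ) 1, w' t ^ 2) := by
    rw [ofReal_integral_eq_lintegral_ofReal hsq (ae_of_all _ fun t => sq_nonneg _)]
    exact lintegral_congr fun t => by rw [← enorm_pow, Real.enorm_of_nonneg (sq_nonneg _)]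
  refine integral_le_of_lintegral_enorm_le (by positivity) ?_
  rw [ENNReal.ofReal_mul four_pos.le, ENNReal.ofReal_ofNat, ← hrhs]
  exact lintegral_enorm_div_one_sub_sq_sq_le hw hw' hw₁
end

section
/- (Weighted gradient bound for functions in D(A)) There exists a constant C>0 such that for every γ∈(0,1) and every u∈D(A) one has ∫_{−1}^{1} (1−x²)^γ·u′(x)² dx ≤ C·∫_{−1}^{1} (Au)(x)² dx, where Au=((1−x²)u′)′. -/
/-!
Since `(1 - x²) u'(x) = ∫_{-1}^x Au = -∫_x^1 Au`, and `(1 - x²)^γ ≤ 1` while `1 - x²` is at least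
the distance `d(x)` from `x` to `{-1, 1}`, the integrand `(1 - x²)^γ u'²` is bounded, uniformly in
`γ ≥ 0`, by `d(x)⁻²` times the square of `∫ |Au|` over the segment joining `x` to its nearer
endpoint. Hardy's inequality `∫_0^b (t⁻¹ ∫_0^t f)² ≤ 4 ∫_0^b f²`, applied on each half of `(-1, 1)`,
then gives the bound with `C = 8`.
-/

open MeasureTheory Set Filter
open scoped ENNReal

noncomputable section

/-- `u` belongs to the domain `D(A)` of the degenerate operator `A u = ((1-x²)u')'` on
`I = (-1,1)`: `u ∈ L²(I)` is locally absolutely continuous on `I` with a.e. derivative `u'`,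
and `x ↦ (1-x²)u'(x)` extends to an absolutely continuous function on `[-1,1]` vanishing at
`x = ±1`, whose a.e. derivative `Au` belongs to `L²(I)`. -/
structure MemDA (u u' Au : ℝ → ℝ) : Prop where
  sq_int : IntegrableOn (fun x => u x ^ 2) (Ioo (-1:ℝ) 1)
  locAC : ∀ a b : ℝ, a ∈ Ioo (-1:ℝ) 1 → b ∈ Ioo (-1:ℝ) 1 →
      u b - u a = ∫ t in a..b, u' t
  deriv_intble : ∀ a b : ℝ, a ∈ Ioo (-1:ℝ) 1 → b ∈ Ioo (-1:ℝ) 1 →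
      IntervalIntegrable u' volume a b
  Au_intble : IntervalIntegrable Au volume (-1) 1
  Au_sq_int : IntegrableOn (fun x => Au x ^ 2) (Ioo (-1:ℝ) 1)
  flux : ∀ x ∈ Ioo (-1:ℝ) 1, (1 - x ^ 2) * u' x = ∫ t in (-1:ℝ)..x, Au t
  flux_one : (∫ t in (-1:ℝ)..(1:ℝ), Au t) = 0

theorem ENNReal.lintegral_sq_le_mul_of_mul_eq_one {α : Type*} [MeasurableSpace α]
    {μ : Measure α} {f v w : α → ℝ≥0∞} (hf : AEMeasurable f μ) (hv : AEMeasurable v μ)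
    (hw : AEMeasurable w μ) (hvw : ∀ᵐ a ∂μ, v a * w a = 1) :
    (∫⁻ a, f a ∂μ) ^ 2 ≤ (∫⁻ a, v a ∂μ) * ∫⁻ a, w a * f a ^ 2 ∂μ := by
  have hsqrt : ∀ᵐ a ∂μ, f a = v a ^ (2⁻¹ : ℝ) * (w a * f a ^ 2) ^ (2⁻¹ : ℝ) := by
    filter_upwards [hvw] with a ha
    rw [← ENNReal.mul_rpow_of_nonneg _ _ (by norm_num), ← mul_assoc, ha, one_mul]
    exact (ENNReal.pow_rpow_inv_natCast two_ne_zero _).symm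
  have holder := ENNReal.lintegral_mul_norm_pow_le hv (hw.mul (hf.pow_const 2))
    (p := 2⁻¹) (q := 2⁻¹) (by norm_num) (by norm_num) (by norm_num)
  rw [lintegral_congr_ae hsqrt]
  calc _ ≤ ((∫⁻ a, v a ∂μ) ^ (2⁻¹ : ℝ) * (∫⁻ a, w a * f a ^ 2 ∂μ) ^ (2⁻¹ : ℝ)) ^ 2 :=
        pow_le_pow_left' holder 2
    _ = _ := by
      rw [mul_pow, ← ENNReal.rpow_natCast, ← ENNReal.rpow_mul, ← ENNReal.rpow_natCast,
        ← ENNReal.rpow_mul]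
      norm_num

theorem setLIntegral_Ioo_lintegral_Ioo_swap {a b : ℝ} {F : ℝ → ℝ → ℝ≥0∞}
    (hF : Measurable (Function.uncurry F)) :
    ∫⁻ t in Ioo a b, ∫⁻ s in Ioo a t, F t s = ∫⁻ s in Ioo a b, ∫⁻ t in Ioo s b, F t s := by
  set G : ℝ → ℝ → ℝ≥0∞ := fun t s => if s < t then F t s else 0
  have hG : Measurable (Function.uncurry G) :=
    Measurable.ite (measurableSet_lt measurable_snd measurable_fst) hF measurable_const
  have inner_left : EqOn (fun t => ∫⁻ s in Ioo a t, F t s)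
      (fun t => ∫⁻ s in Ioo a b, G t s) (Ioo a b) := by
    intro t ht
    have : (G t) = (Iio t).indicator (F t) := by
      ext s; simp [G, indicator_apply]
    simp only [this, lintegral_indicator measurableSet_Iio,
      Measure.restrict_restrict measurableSet_Iio, Iio_inter_Ioo, min_eq_left ht.2.le]
  have inner_right : EqOn (fun s => ∫⁻ t in Ioo s b, F t s)
      (fun s => ∫⁻ t in Ioo a b, G t s) (Ioo a b) := by
    intro s hs
    have : (fun t => G t s) = (Ioi s).indicator (fun t => F t s) := by
      ext t; simp [G, indicator_apply]
    simp only [this, lintegral_indicator measurableSet_Ioi,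
      Measure.restrict_restrict measurableSet_Ioi, Ioi_inter_Ioo, max_eq_left hs.1.le]
  rw [setLIntegral_congr_fun measurableSet_Ioo inner_left,
    setLIntegral_congr_fun measurableSet_Ioo inner_right]
  exact lintegral_lintegral_swap hG.aemeasurable

theorem setLIntegral_Ioo_zero_ofReal_rpow {r : ℝ} (hr : -1 < r) {t : ℝ} (ht : 0 ≤ t) :
    ∫⁻ s in Ioo 0 t, ENNReal.ofReal (s ^ r) = ENNReal.ofReal (t ^ (r + 1) / (r + 1)) := by
  have hint : IntegrableOn (fun s => s ^ r) (Ioo 0 t) :=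
    ((intervalIntegral.intervalIntegrable_rpow' hr).1).mono_set Ioo_subset_Ioc_self
  rw [← ofReal_integral_eq_lintegral_ofReal hint, ← integral_Ioc_eq_integral_Ioo,
    ← intervalIntegral.integral_of_le ht, integral_rpow (Or.inl hr),
    Real.zero_rpow (by linarith), sub_zero]
  filter_upwards [ae_restrict_mem measurableSet_Ioo] with s hs
  exact Real.rpow_nonneg hs.1.le r

theorem setLIntegral_Ioi_ofReal_rpow {r : ℝ} (hr : r < -1) {s : ℝ} (hs : 0 < s) :
    ∫⁻ t in Ioi s, ENNReal.ofReal (t ^ r) = ENNReal.ofReal (-s ^ (r + 1) / (r + 1)) := by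
  rw [← ofReal_integral_eq_lintegral_ofReal (integrableOn_Ioi_rpow_of_lt hr hs),
    integral_Ioi_rpow_of_lt hr hs]
  filter_upwards [ae_restrict_mem measurableSet_Ioi] with t ht
  exact Real.rpow_nonneg (hs.trans ht).le r

/-- Cauchy–Schwarz against the weights `s^(∓1/2)` bounds the inner integral, and after swapping
the order of integration over the triangle `0 < s < t < b` the tail
`∫_s^∞ 2 t^(-3/2) dt = 4 s^(-1/2)` cancels the weight `s^(1/2)`. -/
theorem hardy_lintegral_Ioo_zero {f : ℝ → ℝ≥0∞} (hf : Measurable f) (b : ℝ) :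
    ∫⁻ t in Ioo 0 b, (∫⁻ s in Ioo 0 t, f s) ^ 2 / ENNReal.ofReal t ^ 2
      ≤ 4 * ∫⁻ t in Ioo 0 b, f t ^ 2 := by
  set w : ℝ → ℝ≥0∞ := fun s => ENNReal.ofReal (s ^ (2⁻¹ : ℝ))
  set c : ℝ → ℝ≥0∞ := fun t => 2 * ENNReal.ofReal (t ^ (-(3 / 2) : ℝ))
  have hw : Measurable w := (measurable_id.pow_const _).ennreal_ofReal
  have hc : Measurable c := measurable_const.mul (measurable_id.pow_const _).ennreal_ofReal
  have cauchy_schwarz : ∀ t ∈ Ioo 0 b, (∫⁻ s in Ioo 0 t, f s) ^ 2 / ENNReal.ofReal t ^ 2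
      ≤ c t * ∫⁻ s in Ioo 0 t, w s * f s ^ 2 := by
    intro t ht
    have hvw : ∀ᵐ s ∂volume.restrict (Ioo 0 t),
        ENNReal.ofReal (s ^ (-2⁻¹ : ℝ)) * w s = 1 := by
      filter_upwards [ae_restrict_mem measurableSet_Ioo] with s hs
      rw [← ENNReal.ofReal_mul (Real.rpow_nonneg hs.1.le _), ← Real.rpow_add hs.1]
      norm_num
    have hv : ∫⁻ s in Ioo 0 t, ENNReal.ofReal (s ^ (-2⁻¹ : ℝ)) = c t * ENNReal.ofReal t ^ 2 := by
      have exponents : t ^ (-2⁻¹ + 1 : ℝ) / (-2⁻¹ + 1) = 2 * t ^ (-(3 / 2) : ℝ) * t ^ 2 := by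
        rw [mul_assoc, ← Real.rpow_natCast, ← Real.rpow_add ht.1]
        norm_num
        ring
      rw [setLIntegral_Ioo_zero_ofReal_rpow (by norm_num) ht.1.le, exponents,
        ENNReal.ofReal_mul (mul_nonneg zero_le_two (Real.rpow_nonneg ht.1.le _)),
        ENNReal.ofReal_mul zero_le_two,
        ENNReal.ofReal_pow ht.1.le, ENNReal.ofReal_ofNat]
    refine ENNReal.div_le_of_le_mul ?_
    calc _ ≤ (∫⁻ s in Ioo 0 t, ENNReal.ofReal (s ^ (-2⁻¹ : ℝ))) * ∫⁻ s in Ioo 0 t, w s * f s ^ 2 :=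
          ENNReal.lintegral_sq_le_mul_of_mul_eq_one hf.aemeasurable
            (measurable_id.pow_const _).ennreal_ofReal.aemeasurable hw.aemeasurable hvw
      _ = _ := by rw [hv, mul_right_comm]
  have tail : ∀ s ∈ Ioo 0 b, (∫⁻ t in Ioo s b, c t) * w s ≤ 4 := by
    intro s hs
    calc (∫⁻ t in Ioo s b, c t) * w s ≤ (∫⁻ t in Ioi s, c t) * w s :=
          mul_le_mul_left (lintegral_mono_set Ioo_subset_Ioi_self) _
      _ = 4 := by
        rw [lintegral_const_mul' _ _ ENNReal.ofNat_ne_top,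
          setLIntegral_Ioi_ofReal_rpow (by norm_num) hs.1, mul_assoc,
          ← ENNReal.ofReal_mul' (Real.rpow_nonneg hs.1.le _), div_mul_eq_mul_div, neg_mul,
          ← Real.rpow_add hs.1]
        norm_num
  calc _ ≤ ∫⁻ t in Ioo 0 b, ∫⁻ s in Ioo 0 t, c t * (w s * f s ^ 2) := by
        refine setLIntegral_mono' measurableSet_Ioo fun t ht => ?_
        rw [lintegral_const_mul' _ _
          (ENNReal.mul_ne_top ENNReal.ofNat_ne_top ENNReal.ofReal_ne_top)]
        exact cauchy_schwarz t ht
    _ = ∫⁻ s in Ioo 0 b, ∫⁻ t in Ioo s b, c t * (w s * f s ^ 2) :=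
        setLIntegral_Ioo_lintegral_Ioo_swap (by fun_prop)
    _ = ∫⁻ s in Ioo 0 b, ((∫⁻ t in Ioo s b, c t) * w s) * f s ^ 2 := by
        simp only [lintegral_mul_const _ hc, mul_assoc]
    _ ≤ ∫⁻ s in Ioo 0 b, 4 * f s ^ 2 :=
        setLIntegral_mono' measurableSet_Ioo fun s hs => mul_le_mul_left (tail s hs) _
    _ = 4 * ∫⁻ t in Ioo 0 b, f t ^ 2 := lintegral_const_mul _ (hf.pow_const 2)

theorem setLIntegral_Ioo_comp_add_right (g : ℝ → ℝ≥0∞) (a b c : ℝ) :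
    ∫⁻ x in Ioo (a - c) (b - c), g (x + c) = ∫⁻ x in Ioo a b, g x := by
  rw [← preimage_add_const_Ioo]
  exact (measurePreserving_add_right volume c).setLIntegral_comp_preimage_emb
    (measurableEmbedding_addRight c) g _

theorem setLIntegral_Ioo_comp_neg (g : ℝ → ℝ≥0∞) (a b : ℝ) :
    ∫⁻ x in Ioo (-b) (-a), g (-x) = ∫⁻ x in Ioo a b, g x := by
  have := (Measure.measurePreserving_neg volume).setLIntegral_comp_preimage_emb
    (MeasurableEquiv.neg ℝ).measurableEmbedding g (Ioo a b)
  rwa [Set.neg_preimage, neg_Ioo] at this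

theorem hardy_lintegral_Ioo {f : ℝ → ℝ≥0∞} (hf : Measurable f) (a b : ℝ) :
    ∫⁻ x in Ioo a b, (∫⁻ s in Ioo a x, f s) ^ 2 / ENNReal.ofReal (x - a) ^ 2
      ≤ 4 * ∫⁻ x in Ioo a b, f x ^ 2 := by
  have inner (t : ℝ) : ∫⁻ s in Ioo a (t + a), f s = ∫⁻ s in Ioo 0 t, f (s + a) := by
    rw [← setLIntegral_Ioo_comp_add_right f a (t + a) a]
    simp
  rw [← setLIntegral_Ioo_comp_add_right _ a b a, ← setLIntegral_Ioo_comp_add_right (f · ^ 2) a b a]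
  simp only [sub_self, add_sub_cancel_right, inner]
  exact hardy_lintegral_Ioo_zero (hf.comp (measurable_add_const a)) (b - a)

theorem hardy_lintegral_Ioo_right {f : ℝ → ℝ≥0∞} (hf : Measurable f) (a b : ℝ) :
    ∫⁻ x in Ioo a b, (∫⁻ s in Ioo x b, f s) ^ 2 / ENNReal.ofReal (b - x) ^ 2
      ≤ 4 * ∫⁻ x in Ioo a b, f x ^ 2 := by
  have inner (t : ℝ) : ∫⁻ s in Ioo (-t) b, f s = ∫⁻ s in Ioo (-b) t, f (-s) := by
    rw [← setLIntegral_Ioo_comp_neg f (-t) b, neg_neg]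
  rw [← setLIntegral_Ioo_comp_neg _ a b, ← setLIntegral_Ioo_comp_neg (f · ^ 2) a b]
  have dist (x : ℝ) : b - -x = x - -b := by ring
  simp only [inner, dist]
  exact hardy_lintegral_Ioo (hf.comp measurable_neg) (-b) (-a)

theorem hardy_lintegral_Ioo_two_sided {f Φ : ℝ → ℝ≥0∞} {a b : ℝ}
    (hf : AEMeasurable f (volume.restrict (Ioo a b)))
    (hleft : ∀ x ∈ Ioo a b, Φ x ≤ ∫⁻ s in Ioo a x, f s)
    (hright : ∀ x ∈ Ioo a b, Φ x ≤ ∫⁻ s in Ioo x b, f s) :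
    ∫⁻ x in Ioo a b, Φ x ^ 2 / ENNReal.ofReal (min (x - a) (b - x)) ^ 2
      ≤ 8 * ∫⁻ x in Ioo a b, f x ^ 2 := by
  rcases le_or_gt b a with hba | hab
  · simp [Ioo_eq_empty (not_lt.2 hba)]
  obtain ⟨g, hg, hfg⟩ := hf
  have on_Ioo {c d : ℝ} (h : Ioo c d ⊆ Ioo a b) : ∫⁻ s in Ioo c d, f s = ∫⁻ s in Ioo c d, g s :=
    lintegral_congr_ae (ae_restrict_of_ae_restrict_of_subset h hfg)
  have hL2 : ∫⁻ x in Ioo a b, g x ^ 2 = ∫⁻ x in Ioo a b, f x ^ 2 :=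
    lintegral_congr_ae (hfg.fun_comp (· ^ 2)).symm
  set m := (a + b) / 2 with hm
  have left_half : ∫⁻ x in Ioc a m, Φ x ^ 2 / ENNReal.ofReal (min (x - a) (b - x)) ^ 2
      ≤ 4 * ∫⁻ x in Ioo a b, f x ^ 2 := by
    calc _ ≤ ∫⁻ x in Ioo a m, (∫⁻ s in Ioo a x, g s) ^ 2 / ENNReal.ofReal (x - a) ^ 2 := by
          rw [setLIntegral_congr Ioo_ae_eq_Ioc.symm]
          refine setLIntegral_mono' measurableSet_Ioo fun x hx => ?_
          have hx' : x ∈ Ioo a b := ⟨hx.1, by linarith [hx.2]⟩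
          rw [min_eq_left (by linarith [hx.2]), ← on_Ioo (Ioo_subset_Ioo_right hx'.2.le)]
          gcongr
          exact hleft x hx'
      _ ≤ 4 * ∫⁻ x in Ioo a m, g x ^ 2 := hardy_lintegral_Ioo hg a m
      _ ≤ 4 * ∫⁻ x in Ioo a b, f x ^ 2 := by
          rw [← hL2]
          gcongr
          linarith
  have right_half : ∫⁻ x in Ioo m b, Φ x ^ 2 / ENNReal.ofReal (min (x - a) (b - x)) ^ 2
      ≤ 4 * ∫⁻ x in Ioo a b, f x ^ 2 := by
    calc _ ≤ ∫⁻ x in Ioo m b, (∫⁻ s in Ioo x b, g s) ^ 2 / ENNReal.ofReal (b - x) ^ 2 := by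
          refine setLIntegral_mono' measurableSet_Ioo fun x hx => ?_
          have hx' : x ∈ Ioo a b := ⟨by linarith [hx.1], hx.2⟩
          rw [min_eq_right (by linarith [hx.1]), ← on_Ioo (Ioo_subset_Ioo_left hx'.1.le)]
          gcongr
          exact hright x hx'
      _ ≤ 4 * ∫⁻ x in Ioo m b, g x ^ 2 := hardy_lintegral_Ioo_right hg m b
      _ ≤ 4 * ∫⁻ x in Ioo a b, f x ^ 2 := by
          rw [← hL2]
          gcongr
          linarith
  calc _ = (∫⁻ x in Ioc a m, Φ x ^ 2 / ENNReal.ofReal (min (x - a) (b - x)) ^ 2)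
        + ∫⁻ x in Ioo m b, Φ x ^ 2 / ENNReal.ofReal (min (x - a) (b - x)) ^ 2 := by
        rw [← Ioc_union_Ioo_eq_Ioo (by linarith : a ≤ m) (by linarith : m < b),
          lintegral_union measurableSet_Ioo (disjoint_left.2 fun x h₁ h₂ => (not_lt.2 h₁.2) h₂.1)]
    _ ≤ 4 * (∫⁻ x in Ioo a b, f x ^ 2) + 4 * ∫⁻ x in Ioo a b, f x ^ 2 :=
        add_le_add left_half right_half
    _ = 8 * ∫⁻ x in Ioo a b, f x ^ 2 := by ring

theorem enorm_intervalIntegral_le_setLIntegral_Ioo {E : Type*} [NormedAddCommGroup E]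
    [NormedSpace ℝ E] {f : ℝ → E} {a b : ℝ} (hab : a ≤ b) :
    ‖∫ t in a..b, f t‖ₑ ≤ ∫⁻ t in Ioo a b, ‖f t‖ₑ := by
  rw [intervalIntegral.integral_of_le hab, setLIntegral_congr Ioo_ae_eq_Ioc]
  exact enorm_integral_le_lintegral_enorm _

theorem enorm_one_sub_sq_rpow_mul_sq_le {γ x v : ℝ} (hγ : 0 ≤ γ) (hx : x ∈ Ioo (-1 : ℝ) 1) :
    ‖(1 - x ^ 2) ^ γ * v ^ 2‖ₑ
      ≤ ‖(1 - x ^ 2) * v‖ₑ ^ 2 / ENNReal.ofReal (min (x - -1) (1 - x)) ^ 2 := by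
  obtain ⟨hx₁, hx₂⟩ := hx
  set m := min (x - -1) (1 - x)
  have hm : 0 < m := lt_min (by linarith) (by linarith)
  have hm_le : m ≤ 1 - x ^ 2 := by
    rcases le_total x 0 with hx0 | hx0
    · nlinarith [min_le_left (x - -1) (1 - x)]
    · nlinarith [min_le_right (x - -1) (1 - x)]
  have hpos : 0 < 1 - x ^ 2 := by nlinarith
  have hweight : (1 - x ^ 2) ^ γ ≤ 1 := Real.rpow_le_one hpos.le (by nlinarith) hγ
  have hreal : (1 - x ^ 2) ^ γ * v ^ 2 ≤ ((1 - x ^ 2) * v) ^ 2 / m ^ 2 := by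
    rw [le_div_iff₀ (by positivity), mul_pow]
    calc (1 - x ^ 2) ^ γ * v ^ 2 * m ^ 2 ≤ 1 * v ^ 2 * (1 - x ^ 2) ^ 2 := by
          gcongr
      _ = _ := by ring
  rw [Real.enorm_of_nonneg (by positivity), Real.enorm_eq_ofReal_abs,
    ← ENNReal.ofReal_pow (abs_nonneg _), sq_abs, ← ENNReal.ofReal_pow hm.le,
    ← ENNReal.ofReal_div_of_pos (by positivity)]
  exact ENNReal.ofReal_le_ofReal hreal

theorem setLIntegral_enorm_sq_eq_ofReal {f : ℝ → ℝ} {s : Set ℝ}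
    (hf : IntegrableOn (fun x => f x ^ 2) s) :
    ∫⁻ x in s, ‖f x‖ₑ ^ 2 = ENNReal.ofReal (∫ x in s, f x ^ 2) := by
  rw [ofReal_integral_eq_lintegral_ofReal hf (ae_of_all _ fun x => sq_nonneg _)]
  simp only [Real.enorm_eq_ofReal_abs, ← ENNReal.ofReal_pow (abs_nonneg _), sq_abs]

namespace MemDA

variable {u u' Au : ℝ → ℝ} {x : ℝ}

theorem enorm_flux_le_left (h : MemDA u u' Au) (hx : x ∈ Ioo (-1 : ℝ) 1) :
    ‖(1 - x ^ 2) * u' x‖ₑ ≤ ∫⁻ s in Ioo (-1) x, ‖Au s‖ₑ := by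
  rw [h.flux x hx]
  exact enorm_intervalIntegral_le_setLIntegral_Ioo hx.1.le

theorem enorm_flux_le_right (h : MemDA u u' Au) (hx : x ∈ Ioo (-1 : ℝ) 1) :
    ‖(1 - x ^ 2) * u' x‖ₑ ≤ ∫⁻ s in Ioo x 1, ‖Au s‖ₑ := by
  have hsub : uIcc (-1) x ⊆ uIcc (-1 : ℝ) 1 :=
    uIcc_subset_uIcc left_mem_uIcc (mem_uIcc_of_le hx.1.le hx.2.le)
  rw [h.flux x hx, ← enorm_neg, ← zero_sub, ← h.flux_one,
    intervalIntegral.integral_interval_sub_left h.Au_intble (h.Au_intble.mono_set hsub)]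
  exact enorm_intervalIntegral_le_setLIntegral_Ioo hx.2.le

end MemDA

/-- Weighted gradient bound for functions in `D(A)`, uniform in `γ ∈ (0,1)`. -/
theorem weighted_gradient_bound :
    ∃ C : ℝ, 0 < C ∧ ∀ γ ∈ Ioo (0:ℝ) 1, ∀ u u' Au : ℝ → ℝ, MemDA u u' Au →
      ∫ x in Ioo (-1:ℝ) 1, (1 - x ^ 2) ^ γ * u' x ^ 2
        ≤ C * ∫ x in Ioo (-1:ℝ) 1, Au x ^ 2 := by
  refine ⟨8, by norm_num, fun γ hγ u u' Au h => ?_⟩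
  have hAu : AEMeasurable (fun x => ‖Au x‖ₑ) (volume.restrict (Ioo (-1 : ℝ) 1)) :=
    (h.Au_intble.1.mono_set Ioo_subset_Ioc_self).aestronglyMeasurable.enorm
  have key : ‖∫ x in Ioo (-1 : ℝ) 1, (1 - x ^ 2) ^ γ * u' x ^ 2‖ₑ
      ≤ ENNReal.ofReal (8 * ∫ x in Ioo (-1 : ℝ) 1, Au x ^ 2) :=
    calc _ ≤ ∫⁻ x in Ioo (-1 : ℝ) 1, ‖(1 - x ^ 2) ^ γ * u' x ^ 2‖ₑ :=
          enorm_integral_le_lintegral_enorm _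
      _ ≤ ∫⁻ x in Ioo (-1 : ℝ) 1,
            ‖(1 - x ^ 2) * u' x‖ₑ ^ 2 / ENNReal.ofReal (min (x - -1) (1 - x)) ^ 2 :=
          setLIntegral_mono' measurableSet_Ioo fun x hx =>
            enorm_one_sub_sq_rpow_mul_sq_le hγ.1.le hx
      _ ≤ 8 * ∫⁻ x in Ioo (-1 : ℝ) 1, ‖Au x‖ₑ ^ 2 :=
          hardy_lintegral_Ioo_two_sided hAu (fun x hx => h.enorm_flux_le_left hx)
            (fun x hx => h.enorm_flux_le_right hx)
      _ = _ := by
          rw [setLIntegral_enorm_sq_eq_ofReal h.Au_sq_int, ENNReal.ofReal_mul (by norm_num),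
            ENNReal.ofReal_ofNat]
  rw [Real.enorm_eq_ofReal_abs, ENNReal.ofReal_le_ofReal_iff (by positivity)] at key
  exact (le_abs_self _).trans key
end
end

section
/- (W^{1,1}-bound on the square of a function in D(A)) There exists a constant C>0 such that for every u∈D(A) the function x↦u(x)·u′(x) is integrable on (−1,1) and ∫_{−1}^{1} 2|u(x)·u′(x)| dx ≤ C·(∫_{−1}^{1} u(x)² dx + ∫_{−1}^{1} (Au)(x)² dx); in particular the derivative (u²)′=2uu′ of u² is integrable, i.e. u²∈W^{1,1}(−1,1). -/
open MeasureTheory Set Filter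

noncomputable section

/-!
The flux identity `(1 - x²) u' x = ∫_{-1}^x Au`, together with `∫_{-1}^1 Au = 0`, lets one apply
Cauchy–Schwarz on whichever of `[-1, x]`, `[x, 1]` is shorter: `|u' x| ≤ ‖Au‖₂ / √(1 - x²)`.
As `∫_{-1}^1 dx / √(1 - x²) = π`, this gives `‖u'‖₁ ≤ π ‖Au‖₂`. Since `u` is absolutely continuous
and `u(x₀)² ≤ ‖u‖₂²` at some point `x₀`, also `‖u‖_∞ ≤ ‖u‖₂ + π ‖Au‖₂`, and then
`∫ 2|u u'| ≤ 2 ‖u‖_∞ ‖u'‖₁ ≤ (π + 2π²)(‖u‖₂² + ‖Au‖₂²)`.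
-/

open Real Topology

lemma sq_setIntegral_le_measureReal_mul_setIntegral_sq {α : Type*} [MeasurableSpace α]
    {μ : Measure α} {s : Set α} {f : α → ℝ} (hs : μ s ≠ ⊤) (hf : IntegrableOn f s μ)
    (hf2 : IntegrableOn (fun x => f x ^ 2) s μ) :
    (∫ x in s, f x ∂μ) ^ 2 ≤ μ.real s * ∫ x in s, f x ^ 2 ∂μ := by
  rcases eq_or_ne (μ s) 0 with hs0 | hs0
  · simp [Measure.restrict_eq_zero.2 hs0]
  have hjensen := even_two.convexOn_pow.map_set_average_le (continuous_pow 2).continuousOn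
    isClosed_univ hs0 hs (by simp) hf hf2
  have hpos : 0 < μ.real s := ENNReal.toReal_pos hs0 hs
  simp only [setAverage_eq, smul_eq_mul, mul_pow] at hjensen
  rw [← mul_le_mul_iff_of_pos_left (pow_pos hpos 2)] at hjensen
  field_simp at hjensen
  linarith

lemma sq_intervalIntegral_le {f : ℝ → ℝ} {a b c d : ℝ} (hab : a ≤ b) (hca : c ≤ a) (hbd : b ≤ d)
    (hf : IntervalIntegrable f volume a b) (hf2 : IntegrableOn (fun x => f x ^ 2) (Ioo c d)) :
    (∫ x in a..b, f x) ^ 2 ≤ (b - a) * ∫ x in Ioo c d, f x ^ 2 := by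
  have hsub : Ioc a b ≤ᵐ[volume] Ioo c d :=
    (Ioc_subset_Icc_self.trans (Icc_subset_Icc hca hbd)).eventuallyLE.trans
      Ioo_ae_eq_Icc.symm.le
  have hf2' : IntegrableOn (fun x => f x ^ 2) (Ioc a b) := hf2.mono_set_ae hsub
  calc (∫ x in a..b, f x) ^ 2 ≤ volume.real (Ioc a b) * ∫ x in Ioc a b, f x ^ 2 := by
        rw [intervalIntegral.integral_of_le hab]
        exact sq_setIntegral_le_measureReal_mul_setIntegral_sq measure_Ioc_lt_top.ne
          ((intervalIntegrable_iff_integrableOn_Ioc_of_le hab).1 hf) hf2'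
    _ ≤ (b - a) * ∫ x in Ioo c d, f x ^ 2 := by
        rw [Real.volume_real_Ioc_of_le hab]
        exact mul_le_mul_of_nonneg_left
          (setIntegral_mono_set hf2 (ae_of_all _ fun x => sq_nonneg _) hsub) (by linarith)

lemma abs_intervalIntegral_le_setIntegral_abs {f : ℝ → ℝ} {a b c d : ℝ}
    (ha : a ∈ Ioo c d) (hb : b ∈ Ioo c d) (hf : IntegrableOn f (Ioo c d)) :
    |∫ x in a..b, f x| ≤ ∫ x in Ioo c d, |f x| := by
  have hsub : uIoc a b ⊆ Ioo c d := fun x hx =>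
    ⟨(lt_min ha.1 hb.1).trans hx.1, hx.2.trans_lt (max_lt ha.2 hb.2)⟩
  simpa only [Real.norm_eq_abs] using intervalIntegral.norm_integral_le_integral_norm_uIoc.trans
    (setIntegral_mono_set hf.norm (ae_of_all _ fun x => norm_nonneg _) hsub.eventuallyLE)

lemma integrableOn_one_div_sqrt_one_sub_sq :
    IntegrableOn (fun x : ℝ => 1 / √(1 - x ^ 2)) (Ioo (-1) 1) := by
  have h := Polynomial.Chebyshev.intervalIntegrable_sqrt_one_sub_sq_inv
  rw [intervalIntegrable_iff_integrableOn_Ioo_of_le (by norm_num)] at h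
  simpa [Real.sqrt_inv] using h

lemma integrableOn_const_div_sqrt_one_sub_sq (c : ℝ) :
    IntegrableOn (fun x : ℝ => c / √(1 - x ^ 2)) (Ioo (-1) 1) := by
  have h := integrableOn_one_div_sqrt_one_sub_sq.const_mul c
  simp only [mul_one_div] at h
  exact h

lemma integral_one_div_sqrt_one_sub_sq :
    ∫ x in Ioo (-1:ℝ) 1, 1 / √(1 - x ^ 2) = π := by
  rw [← integral_Ioc_eq_integral_Ioo, ← intervalIntegral.integral_of_le (by norm_num),
    intervalIntegral.integral_eq_sub_of_hasDerivAt_of_le (by norm_num)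
      continuous_arcsin.continuousOn
      (fun x hx => hasDerivAt_arcsin hx.1.ne' hx.2.ne)
      ((intervalIntegrable_iff_integrableOn_Ioo_of_le (by norm_num)).2
        integrableOn_one_div_sqrt_one_sub_sq)]
  simp

namespace MemDA

variable {u u' Au : ℝ → ℝ} (hu : MemDA u u' Au)
include hu

lemma sq_flux_le {x : ℝ} (hx : x ∈ Ioo (-1:ℝ) 1) :
    (∫ t in (-1:ℝ)..x, Au t) ^ 2 ≤ (1 - x ^ 2) * ∫ t in Ioo (-1:ℝ) 1, Au t ^ 2 := by
  have hM : 0 ≤ ∫ t in Ioo (-1:ℝ) 1, Au t ^ 2 :=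
    setIntegral_nonneg measurableSet_Ioo fun t _ => sq_nonneg _
  have hx' : x ∈ uIcc (-1:ℝ) 1 := by
    rw [uIcc_of_le (by norm_num)]
    exact Ioo_subset_Icc_self hx
  have hleft : IntervalIntegrable Au volume (-1) x :=
    hu.Au_intble.mono_set (uIcc_subset_uIcc_left hx')
  have hright : IntervalIntegrable Au volume x 1 :=
    hu.Au_intble.mono_set (uIcc_subset_uIcc_right hx')
  rcases le_total x 0 with hx0 | hx0
  · calc (∫ t in (-1:ℝ)..x, Au t) ^ 2 ≤ (x - -1) * ∫ t in Ioo (-1:ℝ) 1, Au t ^ 2 :=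
          sq_intervalIntegral_le hx.1.le le_rfl hx.2.le hleft hu.Au_sq_int
      _ ≤ (1 - x ^ 2) * ∫ t in Ioo (-1:ℝ) 1, Au t ^ 2 :=
          mul_le_mul_of_nonneg_right (by nlinarith [hx.1]) hM
  · have hflux : ∫ t in (-1:ℝ)..x, Au t = -∫ t in x..1, Au t := by
      linarith [intervalIntegral.integral_add_adjacent_intervals hleft hright, hu.flux_one]
    calc (∫ t in (-1:ℝ)..x, Au t) ^ 2 = (∫ t in x..1, Au t) ^ 2 := by rw [hflux, neg_sq]
      _ ≤ (1 - x) * ∫ t in Ioo (-1:ℝ) 1, Au t ^ 2 :=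
          sq_intervalIntegral_le hx.2.le hx.1.le le_rfl hright hu.Au_sq_int
      _ ≤ (1 - x ^ 2) * ∫ t in Ioo (-1:ℝ) 1, Au t ^ 2 :=
          mul_le_mul_of_nonneg_right (by nlinarith [hx.2]) hM

lemma abs_deriv_le {x : ℝ} (hx : x ∈ Ioo (-1:ℝ) 1) :
    |u' x| ≤ √(∫ t in Ioo (-1:ℝ) 1, Au t ^ 2) / √(1 - x ^ 2) := by
  have hpos : 0 < 1 - x ^ 2 := by nlinarith [hx.1, hx.2]
  have hsq : u' x ^ 2 ≤ (∫ t in Ioo (-1:ℝ) 1, Au t ^ 2) / (1 - x ^ 2) := by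
    rw [le_div_iff₀ hpos]
    have := hu.sq_flux_le hx
    rw [← hu.flux x hx, mul_pow] at this
    nlinarith
  rw [← sqrt_sq_eq_abs, ← sqrt_div' _ hpos.le]
  exact sqrt_le_sqrt hsq

lemma continuousOn_deriv : ContinuousOn u' (Ioo (-1:ℝ) 1) := by
  have hprim : ContinuousOn (fun x => ∫ t in (-1:ℝ)..x, Au t) (Ioo (-1:ℝ) 1) :=
    (intervalIntegral.continuousOn_primitive_interval' hu.Au_intble left_mem_uIcc).mono
      (by rw [uIcc_of_le (by norm_num)]; exact Ioo_subset_Icc_self)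
  have hpos : ∀ x ∈ Ioo (-1:ℝ) 1, 0 < 1 - x ^ 2 := fun x hx => by nlinarith [hx.1, hx.2]
  refine (hprim.div (by fun_prop) fun x hx => (hpos x hx).ne').congr fun x hx => ?_
  rw [Pi.div_apply, eq_div_iff (hpos x hx).ne', mul_comm, hu.flux x hx]

lemma hasDerivAt {x : ℝ} (hx : x ∈ Ioo (-1:ℝ) 1) : HasDerivAt u (u' x) x := by
  have h0 : (0:ℝ) ∈ Ioo (-1:ℝ) 1 := by norm_num
  have hnhds : Ioo (-1:ℝ) 1 ∈ 𝓝 x := isOpen_Ioo.mem_nhds hx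
  have hprim := (intervalIntegral.integral_hasDerivAt_right (hu.deriv_intble 0 x h0 hx)
    (hu.continuousOn_deriv.stronglyMeasurableAtFilter isOpen_Ioo x hx)
    (hu.continuousOn_deriv.continuousAt hnhds)).const_add (u 0)
  refine hprim.congr_of_eventuallyEq ?_
  filter_upwards [hnhds] with y hy
  linarith [hu.locAC 0 y h0 hy]

lemma continuousOn : ContinuousOn u (Ioo (-1:ℝ) 1) :=
  fun _ hx => (hu.hasDerivAt hx).continuousAt.continuousWithinAt

lemma integrableOn_deriv : IntegrableOn u' (Ioo (-1:ℝ) 1) :=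
  Integrable.mono' (integrableOn_const_div_sqrt_one_sub_sq _)
    (hu.continuousOn_deriv.aestronglyMeasurable measurableSet_Ioo)
    ((ae_restrict_iff' measurableSet_Ioo).2 (ae_of_all _ fun _ hx => hu.abs_deriv_le hx))

lemma integral_abs_deriv_le :
    ∫ x in Ioo (-1:ℝ) 1, |u' x| ≤ π * √(∫ t in Ioo (-1:ℝ) 1, Au t ^ 2) := by
  calc ∫ x in Ioo (-1:ℝ) 1, |u' x|
      ≤ ∫ x in Ioo (-1:ℝ) 1, √(∫ t in Ioo (-1:ℝ) 1, Au t ^ 2) / √(1 - x ^ 2) :=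
        setIntegral_mono_on hu.integrableOn_deriv.abs
          (integrableOn_const_div_sqrt_one_sub_sq _) measurableSet_Ioo
          fun _ hx => hu.abs_deriv_le hx
    _ = π * √(∫ t in Ioo (-1:ℝ) 1, Au t ^ 2) := by
        simp_rw [div_eq_mul_one_div (√(∫ t in Ioo (-1:ℝ) 1, Au t ^ 2))]
        rw [integral_const_mul, integral_one_div_sqrt_one_sub_sq, mul_comm]

lemma exists_sq_le : ∃ x₀ ∈ Ioo (-1:ℝ) 1, u x₀ ^ 2 ≤ ∫ x in Ioo (-1:ℝ) 1, u x ^ 2 := by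
  obtain ⟨x₀, hx₀, hle⟩ := exists_le_setAverage (by simp) (by simp) hu.sq_int
  refine ⟨x₀, hx₀, hle.trans ?_⟩
  have hS : 0 ≤ ∫ x in Ioo (-1:ℝ) 1, u x ^ 2 :=
    setIntegral_nonneg measurableSet_Ioo fun t _ => sq_nonneg _
  rw [setAverage_eq, Real.volume_real_Ioo_of_le (by norm_num), smul_eq_mul]
  linarith

lemma abs_le {x : ℝ} (hx : x ∈ Ioo (-1:ℝ) 1) :
    |u x| ≤ √(∫ t in Ioo (-1:ℝ) 1, u t ^ 2) + π * √(∫ t in Ioo (-1:ℝ) 1, Au t ^ 2) := by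
  obtain ⟨x₀, hx₀, hle⟩ := hu.exists_sq_le
  have hux : u x = u x₀ + ∫ t in x₀..x, u' t := by linarith [hu.locAC x₀ x hx₀ hx]
  rw [hux]
  refine (abs_add_le _ _).trans (add_le_add ?_ ?_)
  · rw [← sqrt_sq_eq_abs]; exact sqrt_le_sqrt hle
  · exact (abs_intervalIntegral_le_setIntegral_abs hx₀ hx hu.integrableOn_deriv).trans
      hu.integral_abs_deriv_le

lemma integrableOn_mul_deriv : IntegrableOn (fun x => u x * u' x) (Ioo (-1:ℝ) 1) := by
  refine Integrable.mono' (hu.integrableOn_deriv.abs.const_mul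
    (√(∫ t in Ioo (-1:ℝ) 1, u t ^ 2) + π * √(∫ t in Ioo (-1:ℝ) 1, Au t ^ 2)))
    ((hu.continuousOn.mul hu.continuousOn_deriv).aestronglyMeasurable measurableSet_Ioo)
    ((ae_restrict_iff' measurableSet_Ioo).2 (ae_of_all _ fun x hx => ?_))
  rw [Real.norm_eq_abs, abs_mul]
  exact mul_le_mul_of_nonneg_right (hu.abs_le hx) (abs_nonneg _)

lemma integral_two_mul_abs_mul_deriv_le :
    ∫ x in Ioo (-1:ℝ) 1, 2 * |u x * u' x| ≤
      (π + 2 * π ^ 2) * ((∫ x in Ioo (-1:ℝ) 1, u x ^ 2) + ∫ x in Ioo (-1:ℝ) 1, Au x ^ 2) := by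
  set S := ∫ x in Ioo (-1:ℝ) 1, u x ^ 2
  set M := ∫ x in Ioo (-1:ℝ) 1, Au x ^ 2
  have hS : 0 ≤ S := setIntegral_nonneg measurableSet_Ioo fun _ _ => sq_nonneg _
  have hM : 0 ≤ M := setIntegral_nonneg measurableSet_Ioo fun _ _ => sq_nonneg _
  set K := √S + π * √M
  calc ∫ x in Ioo (-1:ℝ) 1, 2 * |u x * u' x|
      ≤ ∫ x in Ioo (-1:ℝ) 1, 2 * K * |u' x| :=
        setIntegral_mono_on (hu.integrableOn_mul_deriv.abs.const_mul 2)
          (hu.integrableOn_deriv.abs.const_mul _) measurableSet_Ioo fun x hx => by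
            rw [abs_mul, mul_assoc]
            exact mul_le_mul_of_nonneg_left
              (mul_le_mul_of_nonneg_right (hu.abs_le hx) (abs_nonneg _)) zero_le_two
    _ ≤ 2 * K * (π * √M) := by
        rw [integral_const_mul]
        exact mul_le_mul_of_nonneg_left hu.integral_abs_deriv_le (by positivity)
    _ ≤ (π + 2 * π ^ 2) * (S + M) := by
        have hSM : 2 * √S * √M ≤ S + M := by
          nlinarith [sq_nonneg (√S - √M), sq_sqrt hS, sq_sqrt hM]
        nlinarith [sq_sqrt hM, pi_pos, mul_le_mul_of_nonneg_left hSM pi_pos.le,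
          mul_nonneg (sq_nonneg π) hS]

lemma sq_sub_sq_eq_integral {a b : ℝ} (ha : a ∈ Ioo (-1:ℝ) 1) (hb : b ∈ Ioo (-1:ℝ) 1) :
    u b ^ 2 - u a ^ 2 = ∫ t in a..b, 2 * (u t * u' t) := by
  have hsub : uIcc a b ⊆ Ioo (-1:ℝ) 1 := (ordConnected_Ioo).uIcc_subset ha hb
  have hcont : ContinuousOn (fun t => 2 * (u t * u' t)) (uIcc a b) :=
    (continuousOn_const.mul (hu.continuousOn.mul hu.continuousOn_deriv)).mono hsub
  refine (intervalIntegral.integral_eq_sub_of_hasDerivAt (f := fun t => u t ^ 2) (fun x hx => ?_)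
    hcont.intervalIntegrable).symm
  exact ((hu.hasDerivAt (hsub hx)).fun_pow 2).congr_deriv (by norm_num; ring)

end MemDA

/-- `W^{1,1}`-bound on the square of a function in `D(A)`: `x ↦ u(x)u'(x)` is integrable,
`∫ 2|u u'| ≤ C (∫ u² + ∫ (Au)²)`, and `u²` is (locally) absolutely continuous with
derivative `2 u u'`, i.e. `u² ∈ W^{1,1}(-1,1)`. -/
theorem square_W11_bound :
    ∃ C : ℝ, 0 < C ∧ ∀ u u' Au : ℝ → ℝ, MemDA u u' Au →
      IntegrableOn (fun x => u x * u' x) (Ioo (-1:ℝ) 1) ∧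
      (∫ x in Ioo (-1:ℝ) 1, 2 * |u x * u' x|)
        ≤ C * ((∫ x in Ioo (-1:ℝ) 1, u x ^ 2) + ∫ x in Ioo (-1:ℝ) 1, Au x ^ 2) ∧
      ∀ a b : ℝ, a ∈ Ioo (-1:ℝ) 1 → b ∈ Ioo (-1:ℝ) 1 →
        u b ^ 2 - u a ^ 2 = ∫ t in a..b, 2 * (u t * u' t) :=
  ⟨π + 2 * π ^ 2, by positivity, fun _ _ _ hu =>
    ⟨hu.integrableOn_mul_deriv, hu.integral_two_mul_abs_mul_deriv_le,
      fun _ _ ha hb => hu.sq_sub_sq_eq_integral ha hb⟩⟩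
end
end

section
/- (Continuous embedding of V into L^p) For every p∈[1,∞) there exists a constant C_p>0 such that every u∈V belongs to L^p(−1,1) and (∫_{−1}^{1} |u(x)|^p dx)^{1/p} ≤ C_p·(∫_{−1}^{1} u(x)² dx + ∫_{−1}^{1} (1−x²)·u′(x)² dx)^{1/2}. -/
/-!
Fix `x ∈ [0,1)`. By continuity, some `y ∈ [-1/2, 0]` has `u(y)² ≤ 2 ∫ u²`. Writing
`u(x) = u(y) + ∫_y^x u'` and applying Cauchy–Schwarz with the weight `(1-t)^(1+δ)`, which is
at most `4(1-t²)` on `[-1/2, 1)` and whose reciprocal integrates to at most `(1-x)^(-δ)/δ`,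
gives `u(x)² ≤ (8/δ) ‖u‖_V² (1-x)^(-δ)`. Taking `δ = 1/p` yields
`|u(x)|^p ≤ (8p)^(p/2) ‖u‖_V^p (1-x)^(-1/2)`; the reflection `x ↦ -x` treats `x ≤ 0`, and
`(1-x)^(-1/2) + (1+x)^(-1/2)` is integrable on `(-1,1)`.
-/

open MeasureTheory Set Filter

noncomputable section

open Real

theorem setIntegral_Ioo_comp_neg {E : Type*} [NormedAddCommGroup E] [NormedSpace ℝ E]
    (f : ℝ → E) (a : ℝ) : ∫ x in Ioo (-a) a, f (-x) = ∫ x in Ioo (-a) a, f x := by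
  simpa using (Measure.measurePreserving_neg (volume : Measure ℝ)).setIntegral_preimage_emb
    (Homeomorph.neg ℝ).measurableEmbedding f (Ioo (-a) a)

theorem MeasureTheory.IntegrableOn.comp_neg_Ioo {E : Type*} [NormedAddCommGroup E]
    {f : ℝ → E} {a : ℝ} (hf : IntegrableOn f (Ioo (-a) a)) :
    IntegrableOn (fun x => f (-x)) (Ioo (-a) a) := by
  simpa [Function.comp_def] using ((Measure.measurePreserving_neg (volume : Measure ℝ))
    |>.integrableOn_comp_preimage (Homeomorph.neg ℝ).measurableEmbedding).2 hf

theorem sq_integral_mul_le_integral_sq_mul_integral_sq {α : Type*} [MeasurableSpace α]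
    {μ : Measure α} {f g : α → ℝ} (hf0 : 0 ≤ᵐ[μ] f) (hg0 : 0 ≤ᵐ[μ] g)
    (hf : MemLp f 2 μ) (hg : MemLp g 2 μ) :
    (∫ a, f a * g a ∂μ) ^ 2 ≤ (∫ a, f a ^ 2 ∂μ) * ∫ a, g a ^ 2 ∂μ := by
  have holder := integral_mul_le_Lp_mul_Lq_of_nonneg HolderConjugate.two_two hf0 hg0
    (by simpa using hf) (by simpa using hg)
  simp only [rpow_two, ← sqrt_eq_rpow] at holder
  have hfg0 : 0 ≤ ∫ a, f a * g a ∂μ :=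
    integral_nonneg_of_ae (by filter_upwards [hf0, hg0] with a ha hb using mul_nonneg ha hb)
  calc (∫ a, f a * g a ∂μ) ^ 2 ≤ (√(∫ a, f a ^ 2 ∂μ) * √(∫ a, g a ^ 2 ∂μ)) ^ 2 := by gcongr
    _ = (∫ a, f a ^ 2 ∂μ) * ∫ a, g a ^ 2 ∂μ := by
      rw [mul_pow, sq_sqrt (integral_nonneg fun _ => sq_nonneg _),
        sq_sqrt (integral_nonneg fun _ => sq_nonneg _)]

theorem sq_integral_abs_le_integral_inv_mul_integral_mul {α : Type*} [MeasurableSpace α]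
    {μ : Measure α} {w v : α → ℝ} (hw : ∀ᵐ a ∂μ, 0 < w a) (hwm : AEStronglyMeasurable w μ)
    (hvm : AEStronglyMeasurable v μ) (hwinv : Integrable (fun a => (w a)⁻¹) μ)
    (hwv : Integrable (fun a => w a * v a ^ 2) μ) :
    (∫ a, |v a| ∂μ) ^ 2 ≤ (∫ a, (w a)⁻¹ ∂μ) * ∫ a, w a * v a ^ 2 ∂μ := by
  have hf2 : (fun a => √(w a)⁻¹ ^ 2) =ᵐ[μ] fun a => (w a)⁻¹ := by
    filter_upwards [hw] with a ha using sq_sqrt (by positivity)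
  have hg2 : (fun a => (√(w a) * |v a|) ^ 2) =ᵐ[μ] fun a => w a * v a ^ 2 := by
    filter_upwards [hw] with a ha using by rw [mul_pow, sq_sqrt ha.le, sq_abs]
  have hfg : (fun a => √(w a)⁻¹ * (√(w a) * |v a|)) =ᵐ[μ] fun a => |v a| := by
    filter_upwards [hw] with a ha
    rw [← mul_assoc, sqrt_inv, inv_mul_cancel₀ (by positivity), one_mul]
  have hfm : AEStronglyMeasurable (fun a => √(w a)⁻¹) μ :=
    continuous_sqrt.comp_aestronglyMeasurable hwm.aemeasurable.inv.aestronglyMeasurable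
  have hgm : AEStronglyMeasurable (fun a => √(w a) * |v a|) μ :=
    (continuous_sqrt.comp_aestronglyMeasurable hwm).mul
      (continuous_abs.comp_aestronglyMeasurable hvm)
  have cs := sq_integral_mul_le_integral_sq_mul_integral_sq
    (ae_of_all _ fun _ => sqrt_nonneg _) (ae_of_all _ fun _ => by positivity)
    ((memLp_two_iff_integrable_sq hfm).2 (hwinv.congr hf2.symm))
    ((memLp_two_iff_integrable_sq hgm).2 (hwv.congr hg2.symm))
  rwa [integral_congr_ae hfg, integral_congr_ae hf2, integral_congr_ae hg2] at cs

theorem integrableOn_inv_one_sub_rpow {y x s : ℝ} (hx : x < 1) :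
    IntegrableOn (fun t => ((1 - t) ^ s)⁻¹) (Ioc y x) := by
  have hpos : ∀ t ∈ Icc y x, 0 < 1 - t := fun t ht => by linarith [ht.2]
  exact (((continuous_const.sub continuous_id).continuousOn.rpow_const fun t ht =>
    Or.inl (hpos t ht).ne').inv₀ fun t ht => (rpow_pos_of_pos (hpos t ht) s).ne')
    |>.integrableOn_Icc.mono_set Ioc_subset_Icc_self

theorem setIntegral_inv_one_sub_rpow_le {y x δ : ℝ} (hyx : y ≤ x) (hx : x < 1) (hδ : 0 < δ) :
    ∫ t in Ioc y x, ((1 - t) ^ (1 + δ))⁻¹ ≤ (1 - x) ^ (-δ) / δ := by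
  have hinv : EqOn (fun t => ((1 - t) ^ (1 + δ))⁻¹) (fun t => (1 - t) ^ (-(1 + δ))) (Ioc y x) :=
    fun t ht => (rpow_neg (by linarith [ht.2]) _).symm
  have hsign : (0:ℝ) ∉ uIcc (1 - x) (1 - y) := by
    rw [uIcc_of_le (by linarith)]; exact fun h => by linarith [h.1]
  rw [setIntegral_congr_fun measurableSet_Ioc hinv, ← intervalIntegral.integral_of_le hyx,
    intervalIntegral.integral_comp_sub_left (fun t => t ^ (-(1 + δ))),
    integral_rpow (Or.inr ⟨by linarith, hsign⟩), show -(1 + δ) + 1 = -δ by ring,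
    div_neg, ← neg_div, neg_sub]
  gcongr
  exact sub_le_self _ (rpow_nonneg (by linarith) _)

theorem one_sub_rpow_one_add_mul_sq_le {t δ : ℝ} (ht : -2⁻¹ ≤ t) (ht1 : t ≤ 1) (hδ : 0 ≤ δ)
    (hδ1 : δ ≤ 1) (c : ℝ) : (1 - t) ^ (1 + δ) * c ^ 2 ≤ 4 * ((1 - t ^ 2) * c ^ 2) := by
  have h1t : 0 ≤ 1 - t := by linarith
  have hδpow : (1 - t) ^ δ ≤ 2 :=
    calc (1 - t) ^ δ ≤ 2 ^ δ := rpow_le_rpow h1t (by linarith) hδ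
      _ ≤ 2 ^ (1:ℝ) := rpow_le_rpow_of_exponent_le (by norm_num) hδ1
      _ = 2 := rpow_one 2
  rw [← mul_assoc]
  gcongr
  calc (1 - t) ^ (1 + δ) = (1 - t) * (1 - t) ^ δ := by
        rw [rpow_add' h1t (by linarith), rpow_one]
    _ ≤ (1 - t) * 2 := by gcongr
    _ ≤ 4 * (1 - t ^ 2) := by nlinarith

def edgeWeight (x : ℝ) : ℝ := (1 - x) ^ (-2⁻¹ : ℝ) + (1 + x) ^ (-2⁻¹ : ℝ)

theorem edgeWeight_nonneg {x : ℝ} (hx : x ∈ Ioo (-1:ℝ) 1) : 0 ≤ edgeWeight x :=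
  add_nonneg (rpow_nonneg (by linarith [hx.2]) _) (rpow_nonneg (by linarith [hx.1]) _)

theorem integrableOn_edgeWeight : IntegrableOn edgeWeight (Ioo (-1) 1) := by
  have hr : (-1 : ℝ) < -2⁻¹ := by norm_num
  have h1 : IntervalIntegrable (fun x : ℝ => (1 - x) ^ (-2⁻¹ : ℝ)) volume (-1) 1 := by
    simpa [show (1:ℝ) - 2 = -1 by norm_num] using
      (intervalIntegral.intervalIntegrable_rpow' (a := 2) (b := 0) hr).comp_sub_left 1
  have h2 : IntervalIntegrable (fun x : ℝ => (1 + x) ^ (-2⁻¹ : ℝ)) volume (-1) 1 := by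
    simpa [show (2:ℝ) - 1 = 1 by norm_num] using
      (intervalIntegral.intervalIntegrable_rpow' (a := 0) (b := 2) hr).comp_add_left 1
  exact (intervalIntegrable_iff_integrableOn_Ioo_of_le (by norm_num)).1 (h1.add h2)

def vNormSq (u u' : ℝ → ℝ) : ℝ :=
  (∫ x in Ioo (-1:ℝ) 1, u x ^ 2) + ∫ x in Ioo (-1:ℝ) 1, (1 - x ^ 2) * u' x ^ 2

theorem one_sub_sq_mul_sq_nonneg {t : ℝ} (ht : t ∈ Ioo (-1:ℝ) 1) (c : ℝ) :
    0 ≤ (1 - t ^ 2) * c ^ 2 :=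
  mul_nonneg (by nlinarith [ht.1, ht.2]) (sq_nonneg c)

theorem vNormSq_nonneg (u u' : ℝ → ℝ) : 0 ≤ vNormSq u u' :=
  add_nonneg (integral_nonneg fun _ => sq_nonneg _)
    (setIntegral_nonneg measurableSet_Ioo fun _ ht => one_sub_sq_mul_sq_nonneg ht _)

theorem vNormSq_comp_neg (u u' : ℝ → ℝ) :
    vNormSq (fun x => u (-x)) (fun x => -u' (-x)) = vNormSq u u' := by
  simp only [vNormSq, neg_sq]
  congr 1
  · exact setIntegral_Ioo_comp_neg (fun x => u x ^ 2) 1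
  · have h := setIntegral_Ioo_comp_neg (fun x : ℝ => (1 - x ^ 2) * u' x ^ 2) 1
    simp only [neg_sq] at h
    exact h

namespace MemV

variable {u u' : ℝ → ℝ}

theorem continuousOn (h : MemV u u') : ContinuousOn u (Ioo (-1) 1) := by
  intro x hx
  obtain ⟨a, b, ha, hax, hxb, hb⟩ : ∃ a b : ℝ, -1 < a ∧ a < x ∧ x < b ∧ b < 1 :=
    ⟨(x - 1) / 2, (x + 1) / 2, by linarith [hx.1], by linarith [hx.1], by linarith [hx.2],
      by linarith [hx.2]⟩
  have haI : a ∈ Ioo (-1:ℝ) 1 := ⟨ha, by linarith⟩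
  have hprim : ContinuousOn (fun t => u a + ∫ s in a..t, u' s) (uIcc a b) :=
    continuousOn_const.add (intervalIntegral.continuousOn_primitive_interval'
      (h.deriv_intble a b haI ⟨by linarith, hb⟩) left_mem_uIcc)
  have heq : EqOn (fun t => u a + ∫ s in a..t, u' s) u (Ioo a b) := fun t ht => by
    linarith [h.locAC a t haI ⟨by linarith [ht.1], by linarith [ht.2]⟩]
  refine (((hprim.mono ?_).congr heq.symm).continuousAt (Ioo_mem_nhds hax hxb))
    |>.continuousWithinAt
  exact Ioo_subset_Icc_self.trans (uIcc_of_le (by linarith)).symm.subset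

theorem comp_neg (h : MemV u u') : MemV (fun x => u (-x)) (fun x => -u' (-x)) := by
  have hneg : ∀ x ∈ Ioo (-1:ℝ) 1, -x ∈ Ioo (-1:ℝ) 1 := fun x hx =>
    ⟨by linarith [hx.2], by linarith [hx.1]⟩
  refine ⟨h.sq_int.comp_neg_Ioo, fun a b ha hb => ?_, fun a b ha hb => ?_, ?_⟩
  · rw [intervalIntegral.integral_neg, intervalIntegral.integral_comp_neg,
      ← intervalIntegral.integral_symm]
    simpa using h.locAC (-a) (-b) (hneg a ha) (hneg b hb)
  · have hint := (IntervalIntegrable.iff_comp_neg).1 (h.deriv_intble _ _ (hneg a ha) (hneg b hb))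
    rw [neg_neg, neg_neg] at hint
    exact hint.neg
  · simpa only [neg_sq] using h.wsq_int.comp_neg_Ioo

theorem exists_sq_le (h : MemV u u') :
    ∃ y ∈ Icc (-2⁻¹ : ℝ) 0, u y ^ 2 ≤ 2 * ∫ x in Ioo (-1:ℝ) 1, u x ^ 2 := by
  have hsub : Icc (-2⁻¹ : ℝ) 0 ⊆ Ioo (-1) 1 := fun t ht =>
    ⟨by linarith [ht.1], by linarith [ht.2]⟩
  obtain ⟨y, hy, hmin⟩ := isCompact_Icc.exists_isMinOn (nonempty_Icc.2 (by norm_num))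
    ((h.continuousOn.mono hsub).pow 2)
  refine ⟨y, hy, ?_⟩
  have hmean : u y ^ 2 * volume.real (Ioo (-2⁻¹ : ℝ) 0) ≤ ∫ x in Ioo (-2⁻¹ : ℝ) 0, u x ^ 2 :=
    setIntegral_ge_of_const_le_real measurableSet_Ioo (by simp)
      (fun t ht => hmin (Ioo_subset_Icc_self ht))
      (h.sq_int.mono_set (Ioo_subset_Icc_self.trans hsub))
  have hmono : ∫ x in Ioo (-2⁻¹ : ℝ) 0, u x ^ 2 ≤ ∫ x in Ioo (-1:ℝ) 1, u x ^ 2 :=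
    setIntegral_mono_set h.sq_int (ae_of_all _ fun _ => sq_nonneg _)
      (Ioo_subset_Icc_self.trans hsub).eventuallyLE
  rw [Real.volume_real_Ioo] at hmean
  norm_num at hmean
  linarith

theorem aestronglyMeasurable_deriv (h : MemV u u') {y x : ℝ} (hy : y ∈ Ioo (-1:ℝ) 1)
    (hx : x ∈ Ioo (-1:ℝ) 1) : AEStronglyMeasurable u' (volume.restrict (Ioc y x)) :=
  (h.deriv_intble y x hy hx).1.aestronglyMeasurable

theorem integrableOn_one_sub_rpow_mul_deriv_sq (h : MemV u u') {y x δ : ℝ} (hy : -2⁻¹ ≤ y)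
    (hyx : y ≤ x) (hx : x < 1) (hδ : 0 ≤ δ) (hδ1 : δ ≤ 1) :
    IntegrableOn (fun t => (1 - t) ^ (1 + δ) * u' t ^ 2) (Ioc y x) := by
  have hsub : Ioc y x ⊆ Ioo (-1) 1 := fun t ht => ⟨by linarith [ht.1], by linarith [ht.2]⟩
  have hwm : Continuous fun t : ℝ => (1 - t) ^ (1 + δ) :=
    (continuous_const.sub continuous_id).rpow_const fun _ => Or.inr (by linarith)
  refine Integrable.mono' ((h.wsq_int.mono_set hsub).const_mul 4)
    (hwm.aestronglyMeasurable.mul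
      ((h.aestronglyMeasurable_deriv ⟨by linarith, by linarith⟩ ⟨by linarith, hx⟩).pow 2))
    ((ae_restrict_iff' measurableSet_Ioc).2 (ae_of_all _ fun t ht => ?_))
  rw [norm_of_nonneg (mul_nonneg (rpow_nonneg (by linarith [ht.2]) _) (sq_nonneg _))]
  exact one_sub_rpow_one_add_mul_sq_le (by linarith [ht.1]) (by linarith [ht.2]) hδ hδ1 _

theorem setIntegral_one_sub_rpow_mul_deriv_sq_le (h : MemV u u') {y x δ : ℝ} (hy : -2⁻¹ ≤ y)
    (hyx : y ≤ x) (hx : x < 1) (hδ : 0 ≤ δ) (hδ1 : δ ≤ 1) :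
    ∫ t in Ioc y x, (1 - t) ^ (1 + δ) * u' t ^ 2
      ≤ 4 * ∫ t in Ioo (-1:ℝ) 1, (1 - t ^ 2) * u' t ^ 2 := by
  have hsub : Ioc y x ⊆ Ioo (-1) 1 := fun t ht => ⟨by linarith [ht.1], by linarith [ht.2]⟩
  calc ∫ t in Ioc y x, (1 - t) ^ (1 + δ) * u' t ^ 2
      ≤ ∫ t in Ioc y x, 4 * ((1 - t ^ 2) * u' t ^ 2) :=
        setIntegral_mono_on (h.integrableOn_one_sub_rpow_mul_deriv_sq hy hyx hx hδ hδ1)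
          ((h.wsq_int.mono_set hsub).const_mul 4) measurableSet_Ioc fun t ht =>
          one_sub_rpow_one_add_mul_sq_le (by linarith [ht.1]) (by linarith [ht.2]) hδ hδ1 _
    _ = 4 * ∫ t in Ioc y x, (1 - t ^ 2) * u' t ^ 2 := integral_const_mul _ _
    _ ≤ 4 * ∫ t in Ioo (-1:ℝ) 1, (1 - t ^ 2) * u' t ^ 2 := by
        gcongr
        · exact (ae_restrict_iff' measurableSet_Ioo).2
            (ae_of_all _ fun t ht => one_sub_sq_mul_sq_nonneg ht _)
        · exact h.wsq_int

theorem sq_integral_abs_deriv_le (h : MemV u u') {y x δ : ℝ} (hy : -2⁻¹ ≤ y) (hyx : y ≤ x)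
    (hx : x < 1) (hδ : 0 < δ) (hδ1 : δ ≤ 1) :
    (∫ t in Ioc y x, |u' t|) ^ 2
      ≤ 4 / δ * (1 - x) ^ (-δ) * ∫ t in Ioo (-1:ℝ) 1, (1 - t ^ 2) * u' t ^ 2 := by
  have hpos : ∀ t ∈ Ioc y x, 0 < 1 - t := fun t ht => by linarith [ht.2]
  have cs := sq_integral_abs_le_integral_inv_mul_integral_mul
    ((ae_restrict_iff' measurableSet_Ioc).2 (ae_of_all _ fun t ht => rpow_pos_of_pos (hpos t ht) _))
    ((continuous_const.sub continuous_id).rpow_const fun _ => Or.inr (by linarith)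
      : Continuous fun t : ℝ => (1 - t) ^ (1 + δ)).aestronglyMeasurable
    (h.aestronglyMeasurable_deriv ⟨by linarith, by linarith⟩ ⟨by linarith, hx⟩)
    (integrableOn_inv_one_sub_rpow hx)
    (h.integrableOn_one_sub_rpow_mul_deriv_sq hy hyx hx hδ.le hδ1)
  calc (∫ t in Ioc y x, |u' t|) ^ 2 ≤ _ := cs
    _ ≤ (1 - x) ^ (-δ) / δ * (4 * ∫ t in Ioo (-1:ℝ) 1, (1 - t ^ 2) * u' t ^ 2) :=
        mul_le_mul (setIntegral_inv_one_sub_rpow_le hyx hx hδ)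
          (h.setIntegral_one_sub_rpow_mul_deriv_sq_le hy hyx hx hδ.le hδ1)
          (setIntegral_nonneg measurableSet_Ioc fun t ht =>
            mul_nonneg (rpow_nonneg (hpos t ht).le _) (sq_nonneg _)) (by positivity)
    _ = 4 / δ * (1 - x) ^ (-δ) * ∫ t in Ioo (-1:ℝ) 1, (1 - t ^ 2) * u' t ^ 2 := by ring

theorem sq_le (h : MemV u u') {δ x : ℝ} (hδ : 0 < δ) (hδ1 : δ ≤ 1) (hx0 : 0 ≤ x) (hx1 : x < 1) :
    u x ^ 2 ≤ 8 / δ * vNormSq u u' * (1 - x) ^ (-δ) := by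
  obtain ⟨y, hy, hyA⟩ := h.exists_sq_le
  have hyx : y ≤ x := hy.2.trans hx0
  have hdiff : |u x - u y| ≤ ∫ t in Ioc y x, |u' t| := by
    rw [h.locAC y x ⟨by linarith [hy.1], by linarith⟩ ⟨by linarith, hx1⟩,
      intervalIntegral.integral_of_le hyx]
    exact abs_integral_le_integral_abs
  set A := ∫ x in Ioo (-1:ℝ) 1, u x ^ 2
  set B := ∫ x in Ioo (-1:ℝ) 1, (1 - x ^ 2) * u' x ^ 2
  set c := (1 - x) ^ (-δ)
  have hA : 0 ≤ A := integral_nonneg fun _ => sq_nonneg _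
  have hc : 4 ≤ 8 / δ * c := by
    have h1c : 1 ≤ c :=
      one_le_rpow_of_pos_of_le_one_of_nonpos (by linarith) (by linarith) (by linarith)
    have h8δ : 8 ≤ 8 / δ := by rw [le_div_iff₀ hδ]; linarith
    nlinarith
  calc u x ^ 2 ≤ 2 * u y ^ 2 + 2 * (u x - u y) ^ 2 := by nlinarith [sq_nonneg (2 * u y - u x)]
    _ ≤ 2 * (2 * A) + 2 * (4 / δ * c * B) := by
        rw [← sq_abs (u x - u y)]
        gcongr
        exact (pow_le_pow_left₀ (abs_nonneg _) hdiff 2).trans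
          (h.sq_integral_abs_deriv_le hy.1 hyx hx1 hδ hδ1)
    _ = 4 * A + 8 / δ * c * B := by ring
    _ ≤ 8 / δ * (A + B) * c := by linarith [mul_le_mul_of_nonneg_right hc hA]

theorem abs_rpow_le (h : MemV u u') {p x : ℝ} (hp : 1 ≤ p) (hx0 : 0 ≤ x) (hx1 : x < 1) :
    |u x| ^ p ≤ (8 * p) ^ (p / 2) * vNormSq u u' ^ (p / 2) * (1 - x) ^ (-2⁻¹ : ℝ) := by
  have hp0 : 0 < p := by linarith
  have hsq := h.sq_le (inv_pos.2 hp0) (inv_le_one_of_one_le₀ hp) hx0 hx1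
  rw [div_inv_eq_mul] at hsq
  have hS := vNormSq_nonneg u u'
  calc |u x| ^ p = (u x ^ 2) ^ (p / 2) := by
        rw [← sq_abs, ← rpow_natCast, ← rpow_mul (abs_nonneg _)]; norm_num; ring_nf
    _ ≤ (8 * p * vNormSq u u' * (1 - x) ^ (-p⁻¹)) ^ (p / 2) := by gcongr
    _ = (8 * p) ^ (p / 2) * vNormSq u u' ^ (p / 2) * (1 - x) ^ (-2⁻¹ : ℝ) := by
        rw [mul_rpow (by positivity) (rpow_nonneg (by linarith) _), mul_rpow (by positivity) hS,
          ← rpow_mul (by linarith)]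
        congr 2
        field_simp

theorem abs_rpow_le_mul_edgeWeight (h : MemV u u') {p x : ℝ} (hp : 1 ≤ p)
    (hx : x ∈ Ioo (-1:ℝ) 1) :
    |u x| ^ p ≤ (8 * p) ^ (p / 2) * vNormSq u u' ^ (p / 2) * edgeWeight x := by
  have hK : 0 ≤ (8 * p) ^ (p / 2) * vNormSq u u' ^ (p / 2) :=
    mul_nonneg (rpow_nonneg (by linarith) _) (rpow_nonneg (vNormSq_nonneg u u') _)
  rcases le_total 0 x with hx0 | hx0
  · calc |u x| ^ p ≤ (8 * p) ^ (p / 2) * vNormSq u u' ^ (p / 2) * (1 - x) ^ (-2⁻¹ : ℝ) :=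
          h.abs_rpow_le hp hx0 hx.2
      _ ≤ (8 * p) ^ (p / 2) * vNormSq u u' ^ (p / 2) * edgeWeight x :=
          mul_le_mul_of_nonneg_left (le_add_of_nonneg_right (rpow_nonneg (by linarith [hx.1]) _)) hK
  · have hneg := h.comp_neg.abs_rpow_le hp (neg_nonneg.2 hx0) (by linarith [hx.1])
    simp only [neg_neg, sub_neg_eq_add, vNormSq_comp_neg] at hneg
    calc |u x| ^ p ≤ (8 * p) ^ (p / 2) * vNormSq u u' ^ (p / 2) * (1 + x) ^ (-2⁻¹ : ℝ) := hneg
      _ ≤ (8 * p) ^ (p / 2) * vNormSq u u' ^ (p / 2) * edgeWeight x :=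
          mul_le_mul_of_nonneg_left (le_add_of_nonneg_left (rpow_nonneg (by linarith [hx.2]) _)) hK

theorem integrableOn_abs_rpow (h : MemV u u') {p : ℝ} (hp : 1 ≤ p) :
    IntegrableOn (fun x => |u x| ^ p) (Ioo (-1) 1) :=
  Integrable.mono' (integrableOn_edgeWeight.const_mul _)
    ((h.continuousOn.abs.rpow_const fun _ _ => Or.inr (by linarith)).aestronglyMeasurable
      measurableSet_Ioo)
    ((ae_restrict_iff' measurableSet_Ioo).2 (ae_of_all _ fun x hx => by
      rw [norm_of_nonneg (rpow_nonneg (abs_nonneg _) _)]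
      exact h.abs_rpow_le_mul_edgeWeight hp hx))

theorem integral_abs_rpow_le (h : MemV u u') {p : ℝ} (hp : 1 ≤ p) :
    ∫ x in Ioo (-1:ℝ) 1, |u x| ^ p
      ≤ (8 * p) ^ (p / 2) * (∫ x in Ioo (-1:ℝ) 1, edgeWeight x) * vNormSq u u' ^ (p / 2) :=
  calc ∫ x in Ioo (-1:ℝ) 1, |u x| ^ p
      ≤ ∫ x in Ioo (-1:ℝ) 1, (8 * p) ^ (p / 2) * vNormSq u u' ^ (p / 2) * edgeWeight x :=
        setIntegral_mono_on (h.integrableOn_abs_rpow hp) (integrableOn_edgeWeight.const_mul _)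
          measurableSet_Ioo fun _ hx => h.abs_rpow_le_mul_edgeWeight hp hx
    _ = (8 * p) ^ (p / 2) * (∫ x in Ioo (-1:ℝ) 1, edgeWeight x) * vNormSq u u' ^ (p / 2) := by
        rw [integral_const_mul]; ring

end MemV

/-- Continuous embedding of `V` into `L^p(-1,1)` for every finite `p ≥ 1`. -/
theorem V_embeds_Lp (p : ℝ) (hp : 1 ≤ p) :
    ∃ C : ℝ, 0 < C ∧ ∀ u u' : ℝ → ℝ, MemV u u' →
      IntegrableOn (fun x => |u x| ^ p) (Ioo (-1:ℝ) 1) ∧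
      (∫ x in Ioo (-1:ℝ) 1, |u x| ^ p) ^ (1 / p)
        ≤ C * Real.sqrt ((∫ x in Ioo (-1:ℝ) 1, u x ^ 2)
            + ∫ x in Ioo (-1:ℝ) 1, (1 - x ^ 2) * u' x ^ 2) := by
  set K := (8 * p) ^ (p / 2) * ∫ x in Ioo (-1:ℝ) 1, edgeWeight x
  have hK : 0 ≤ K := mul_nonneg (rpow_nonneg (by linarith) _)
    (setIntegral_nonneg measurableSet_Ioo fun _ hx => edgeWeight_nonneg hx)
  refine ⟨K ^ (1 / p) + 1, by positivity, fun u u' hu => ⟨hu.integrableOn_abs_rpow hp, ?_⟩⟩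
  change _ ≤ _ * √(vNormSq u u')
  have hS := vNormSq_nonneg u u'
  calc (∫ x in Ioo (-1:ℝ) 1, |u x| ^ p) ^ (1 / p)
      ≤ (K * vNormSq u u' ^ (p / 2)) ^ (1 / p) := by
        gcongr
        exact hu.integral_abs_rpow_le hp
    _ = K ^ (1 / p) * √(vNormSq u u') := by
        rw [mul_rpow hK (rpow_nonneg hS _), ← rpow_mul hS, sqrt_eq_rpow]
        congr 2
        field_simp
    _ ≤ (K ^ (1 / p) + 1) * √(vNormSq u u') := by gcongr; linarith
end
end

section
/- (Strong maximum principle for linear cooperative degenerate parabolic systems) Let T>0, Q_T=(0,T)×(−1,1), and let k₁,k₂>0. Let a,b,c,d:Q_T→ℝ be bounded functions with b(t,x)≥0 and c(t,x)≥0 on Q_T. Let u,v be continuous on [0,T]×[−1,1], of class C^{1,2} on Q_T, satisfy u≤0 and v≤0 on Q_T, and satisfy on Q_T the differential inequalities ∂ₜu − k₁·∂ₓ((1−x²)∂ₓu) ≤ a·u + b·v and ∂ₜv − k₂·∂ₓ((1−x²)∂ₓv) ≤ c·u + d·v. If there exists (t₁,x₁)∈Q_T with u(t₁,x₁)=0,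 then u(t,x)=0 for all t∈(0,t₁] and all x∈(−1,1); analogously, if there exists (t₂,x₂)∈Q_T with v(t₂,x₂)=0, then v(t,x)=0 for all t∈(0,t₂] and all x∈(−1,1). -/
open Set Filter

noncomputable section

/-- The parabolic cylinder `Q_T = (0,T) × (-1,1)` as a subset of `ℝ × ℝ`. -/
def cylQT (T : ℝ) : Set (ℝ × ℝ) := Ioo (0:ℝ) T ×ˢ Ioo (-1:ℝ) 1

/-!
Since `b v ≤ 0` and `c u ≤ 0`, each component is a nonpositive subsolution of the scalar
inequality `∂ₜu - k ∂ₓ((1 - x²) ∂ₓu) ≤ a u` with `a` bounded below by some `-M`, `M > 0`.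
For such a `u`, negativity propagates forward in time: if `u(t₀,x₀) < 0` and `t₀ < t₁`,
compare `u` on the slanted strip `t₀ ≤ t ≤ t₁`, `|x - x₀ - s (t - t₀)| ≤ δ` joining `(t₀,x₀)`
to `(t₁,x₁)`, which stays away from `x = ±1`, with the barrier
`W = -ε e^{-γ(t-t₀)} e^{B(x)} cos (λ (x - x₀ - s (t - t₀)))`, `λ δ = π/2`.
It vanishes on the lateral sides and lies above `u` at `t = t₀` for small `ε`. The weight `B`,
with `2k(1 - x²) B' = 2kx - s`, cancels the sine terms, so that `LW = -(γ + G) W` with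
`G ≥ -kλ²`. For `γ = M + kλ²`, the function `u - W` cannot have a positive maximum on the strip
(there `∂ₜ ≥ 0`, `∂ₓ = 0`, `∂ₓₓ ≤ 0`), hence `u(t₁,x₁) ≤ W(t₁,x₁) < 0`. A zero of `u` at
`(t₁,x₁)` thus forces `u = 0` on `(0,t₁) × (-1,1)`, and on `{t₁} × (-1,1)` by continuity.
-/

open Topology Real

lemma IsLocalMaxOn.hasDerivAt_nonneg_of_Iic {f : ℝ → ℝ} {t d : ℝ}
    (h : IsLocalMaxOn f (Iic t) t) (hd : HasDerivAt f d t) : 0 ≤ d := by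
  have hcone : (-1 : ℝ) ∈ posTangentConeAt (Iic t) t :=
    mem_posTangentConeAt_of_segment_subset (by
      rw [segment_symm, segment_eq_Icc (by linarith)]
      exact Icc_subset_Iic_self)
  simpa using h.hasFDerivWithinAt_nonpos hd.hasDerivWithinAt.hasFDerivWithinAt hcone

lemma IsLocalMax.second_deriv_nonpos {f f' : ℝ → ℝ} {x d : ℝ} (hmax : IsLocalMax f x)
    (hf : ∀ᶠ y in 𝓝 x, HasDerivAt f (f' y) y) (hf' : HasDerivAt f' d x) (h0 : f' x = 0) :
    d ≤ 0 := by
  by_contra! hd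
  have hslope : Tendsto (slope f' x) (𝓝[>] x) (𝓝 d) :=
    (hasDerivAt_iff_tendsto_slope.1 hf').mono_left (nhdsWithin_mono _ fun _ hy => ne_of_gt hy)
  have hright : ∀ᶠ y in 𝓝[>] x, HasDerivAt f (f' y) y ∧ 0 < f' y ∧ f y ≤ f x := by
    filter_upwards [nhdsWithin_le_nhds hf, hslope.eventually (eventually_gt_nhds hd),
      nhdsWithin_le_nhds hmax, self_mem_nhdsWithin] with y hy hpos hle hxy
    rw [slope_def_field, h0, sub_zero] at hpos
    exact ⟨hy, (div_pos_iff_of_pos_right (sub_pos.2 hxy)).1 hpos, hle⟩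
  obtain ⟨b, hxb, hb⟩ := mem_nhdsGT_iff_exists_Ioo_subset.1 hright
  obtain ⟨c, hxc, hcb⟩ := exists_between (mem_Ioi.1 hxb)
  have hright' : ∀ y ∈ Ioc x c, HasDerivAt f (f' y) y ∧ 0 < f' y ∧ f y ≤ f x :=
    fun y hy => hb ⟨hy.1, hy.2.trans_lt hcb⟩
  have hmono : StrictMonoOn f (Icc x c) := by
    refine strictMonoOn_of_hasDerivWithinAt_pos (convex_Icc x c) (f' := f') ?_ ?_ ?_
    · rintro y ⟨hxy, hyc⟩
      rcases hxy.eq_or_lt with rfl | hxy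
      · exact hf.self_of_nhds.continuousAt.continuousWithinAt
      · exact (hright' y ⟨hxy, hyc⟩).1.continuousAt.continuousWithinAt
    · rw [interior_Icc]
      exact fun y hy => (hright' y (Ioo_subset_Ioc_self hy)).1.hasDerivWithinAt
    · rw [interior_Icc]
      exact fun y hy => (hright' y (Ioo_subset_Ioc_self hy)).2.1
  have hfc := hmono (left_mem_Icc.2 hxc.le) (right_mem_Icc.2 hxc.le) hxc
  linarith [(hright' c (right_mem_Ioc.2 hxc)).2.2]

/-- `∂ₜf - k ∂ₓ((1 - x²) ∂ₓf)` in terms of the values `ft`, `fx`, `fxx` of the partial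
derivatives of `f` at `(t, x)`. -/
def legendreHeatOp (k x ft fx fxx : ℝ) : ℝ := ft - k * (-(2 * x) * fx + (1 - x ^ 2) * fxx)

lemma legendreHeatOp_sub (k x ft fx fxx gt gx gxx : ℝ) :
    legendreHeatOp k x (ft - gt) (fx - gx) (fxx - gxx) =
      legendreHeatOp k x ft fx fxx - legendreHeatOp k x gt gx gxx := by
  unfold legendreHeatOp; ring

lemma legendreHeatOp_nonneg_of_isMaxOn {k ts xs zt zxx : ℝ} {z : ℝ → ℝ → ℝ} {zx : ℝ → ℝ}
    {D : Set (ℝ × ℝ)} (hk : 0 ≤ k) (hxs : xs ^ 2 ≤ 1)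
    (hmax : IsMaxOn (fun p => z p.1 p.2) D (ts, xs))
    (hleft : ∀ᶠ t in 𝓝[≤] ts, (t, xs) ∈ D) (hnear : ∀ᶠ x in 𝓝 xs, (ts, x) ∈ D)
    (hzt : HasDerivAt (z · xs) zt ts) (hzx : ∀ᶠ x in 𝓝 xs, HasDerivAt (z ts) (zx x) x)
    (hzxx : HasDerivAt zx zxx xs) : 0 ≤ legendreHeatOp k xs zt (zx xs) zxx := by
  have hmax_t : IsLocalMaxOn (z · xs) (Iic ts) ts := hleft.mono fun t ht => hmax ht
  have hmax_x : IsLocalMax (z ts) xs := hnear.mono fun x hx => hmax hx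
  have hzt_nonneg : 0 ≤ zt := hmax_t.hasDerivAt_nonneg_of_Iic hzt
  have hzx_eq : zx xs = 0 := hmax_x.hasDerivAt_eq_zero hzx.self_of_nhds
  have hzxx_nonpos : zxx ≤ 0 := hmax_x.second_deriv_nonpos hzx hzxx hzx_eq
  have : k * ((1 - xs ^ 2) * zxx) ≤ 0 :=
    mul_nonpos_of_nonneg_of_nonpos hk (mul_nonpos_of_nonneg_of_nonpos (by linarith) hzxx_nonpos)
  simp only [legendreHeatOp, hzx_eq]
  linarith

def stripAlong (c : ℝ → ℝ) (t₀ t₁ δ : ℝ) : Set (ℝ × ℝ) :=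
  {p | p.1 ∈ Icc t₀ t₁ ∧ |p.2 - c p.1| ≤ δ}

lemma isCompact_stripAlong {c : ℝ → ℝ} (hc : Continuous c) (t₀ t₁ δ : ℝ) :
    IsCompact (stripAlong c t₀ t₁ δ) := by
  have : stripAlong c t₀ t₁ δ =
      (fun q : ℝ × ℝ => (q.1, q.2 + c q.1)) '' (Icc t₀ t₁ ×ˢ Icc (-δ) δ) := by
    ext ⟨t, x⟩
    simp only [stripAlong, mem_ofPred_eq, mem_image, mem_prod, Prod.exists, Prod.mk.injEq, abs_le]
    constructor
    · rintro ⟨ht, hx⟩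
      exact ⟨t, x - c t, ⟨ht, by linarith, by linarith⟩, rfl, by ring⟩
    · rintro ⟨t, y, ⟨ht, hy⟩, rfl, rfl⟩
      exact ⟨ht, by simpa using hy⟩
  rw [this]
  exact (isCompact_Icc.prod isCompact_Icc).image (by fun_prop)

theorem nonpos_on_stripAlong {k t₀ t₁ δ : ℝ} {c : ℝ → ℝ} {z zt zx zxx : ℝ → ℝ → ℝ}
    (hk : 0 ≤ k) (hc : Continuous c) (hD : ∀ p ∈ stripAlong c t₀ t₁ δ, p.2 ^ 2 ≤ 1)
    (hz : ContinuousOn (fun p => z p.1 p.2) (stripAlong c t₀ t₁ δ))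
    (hbottom : ∀ x, |x - c t₀| ≤ δ → z t₀ x ≤ 0)
    (hside : ∀ t ∈ Icc t₀ t₁, ∀ x, |x - c t| = δ → z t x ≤ 0)
    (hderiv : ∀ t ∈ Ioc t₀ t₁, ∀ x, |x - c t| < δ →
      HasDerivAt (z · x) (zt t x) t ∧ HasDerivAt (z t) (zx t x) x ∧
        HasDerivAt (zx t) (zxx t x) x)
    (hsub : ∀ t ∈ Ioc t₀ t₁, ∀ x, |x - c t| < δ → 0 < z t x →
      legendreHeatOp k x (zt t x) (zx t x) (zxx t x) < 0) :
    ∀ p ∈ stripAlong c t₀ t₁ δ, z p.1 p.2 ≤ 0 := by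
  intro p hp
  obtain ⟨⟨ts, xs⟩, hqD, hmax⟩ := (isCompact_stripAlong hc t₀ t₁ δ).exists_isMaxOn ⟨p, hp⟩ hz
  refine (hmax hp).trans (not_lt.1 fun hpos => ?_)
  obtain ⟨⟨hts₀, hts₁⟩, hxs⟩ := hqD
  have hts : t₀ < ts := hts₀.lt_of_ne (by rintro rfl; exact (hbottom xs hxs).not_gt hpos)
  have hxs' : |xs - c ts| < δ := hxs.lt_of_ne fun h => (hside ts ⟨hts₀, hts₁⟩ xs h).not_gt hpos
  have hnear : ∀ᶠ x in 𝓝 xs, |x - c ts| < δ :=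
    (by fun_prop : Continuous fun x => |x - c ts|).continuousAt.eventually_lt
      continuousAt_const hxs'
  have hleft : ∀ᶠ t in 𝓝[≤] ts, (t, xs) ∈ stripAlong c t₀ t₁ δ := by
    filter_upwards [nhdsWithin_le_nhds (eventually_gt_nhds hts),
      nhdsWithin_le_nhds ((by fun_prop : Continuous fun t => |xs - c t|).continuousAt.eventually_lt
        continuousAt_const hxs'), self_mem_nhdsWithin] with t ht₀ ht hts'
    exact ⟨⟨ht₀.le, hts'.trans hts₁⟩, ht.le⟩
  obtain ⟨hzt, -, hzxx⟩ := hderiv ts ⟨hts, hts₁⟩ xs hxs'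
  exact (hsub ts ⟨hts, hts₁⟩ xs hxs' hpos).not_ge <|
    legendreHeatOp_nonneg_of_isMaxOn hk (hD _ ⟨⟨hts₀, hts₁⟩, hxs⟩) hmax hleft
      (hnear.mono fun x hx => ⟨⟨hts₀, hts₁⟩, hx.le⟩) hzt
      (hnear.mono fun x hx => (hderiv ts ⟨hts, hts₁⟩ x hx).2.1) hzxx

/-- A primitive of `(2kx - s) / (2k(1 - x²))`: the factor `exp (driftWeight k s x)` of the
barrier cancels the first-order terms created by the moving phase `x - s t`. -/
def driftWeight (k s x : ℝ) : ℝ :=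
  -(1 / 2) * log (1 - x ^ 2) - s / (4 * k) * (log (1 + x) - log (1 - x))

def driftWeightDeriv (k s x : ℝ) : ℝ := (2 * k * x - s) / (2 * k * (1 - x ^ 2))

def driftWeightDeriv2 (k s x : ℝ) : ℝ := (k * (1 + x ^ 2) - s * x) / (k * (1 - x ^ 2) ^ 2)

section DriftWeight

variable {k x : ℝ} (s : ℝ)

lemma hasDerivAt_driftWeight (hk : k ≠ 0) (hx : x ∈ Ioo (-1 : ℝ) 1) :
    HasDerivAt (driftWeight k s) (driftWeightDeriv k s x) x := by
  obtain ⟨hx₁, hx₂⟩ := hx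
  have h1 : (0 : ℝ) < 1 - x ^ 2 := by nlinarith
  have h2 : (0 : ℝ) < 1 + x := by linarith
  have h3 : (0 : ℝ) < 1 - x := by linarith
  have hlog1 := ((hasDerivAt_id x).fun_pow 2).const_sub 1 |>.log h1.ne'
  have hlog2 := ((hasDerivAt_id x).const_add 1).log h2.ne'
  have hlog3 := ((hasDerivAt_id x).const_sub 1).log h3.ne'
  refine ((hlog1.const_mul (-(1 / 2))).sub
    ((hlog2.sub hlog3).const_mul (s / (4 * k)))).congr_deriv ?_
  simp only [driftWeightDeriv, id]
  field_simp
  ring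

lemma hasDerivAt_driftWeightDeriv (hk : k ≠ 0) (hx : x ∈ Ioo (-1 : ℝ) 1) :
    HasDerivAt (driftWeightDeriv k s) (driftWeightDeriv2 k s x) x := by
  obtain ⟨hx₁, hx₂⟩ := hx
  have h1 : (1 : ℝ) - x ^ 2 ≠ 0 := by nlinarith
  have hden : 2 * k * (1 - x ^ 2) ≠ 0 := by simp [hk, h1]
  have hnum := ((hasDerivAt_id x).const_mul (2 * k)).sub_const s
  have hdenom := (((hasDerivAt_id x).fun_pow 2).const_sub 1).const_mul (2 * k)
  refine (hnum.div hdenom hden).congr_deriv ?_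
  simp only [driftWeightDeriv2, id]
  field_simp
  ring

lemma continuousOn_driftWeight : ContinuousOn (driftWeight k s) (Ioo (-1 : ℝ) 1) := by
  intro x hx
  obtain ⟨hx₁, hx₂⟩ := hx
  have : (0 : ℝ) < 1 - x ^ 2 := by nlinarith
  unfold driftWeight
  fun_prop (disch := linarith)

end DriftWeight

def barrier (k s t₀ x₀ ε γ lam t x : ℝ) : ℝ :=
  -(ε * exp (-(γ * (t - t₀))) * exp (driftWeight k s x) * cos (lam * (x - x₀ - s * (t - t₀))))

def barrierDerivT (k s t₀ x₀ ε γ lam t x : ℝ) : ℝ :=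
  ε * exp (-(γ * (t - t₀))) * exp (driftWeight k s x) *
    (γ * cos (lam * (x - x₀ - s * (t - t₀))) - lam * s * sin (lam * (x - x₀ - s * (t - t₀))))

def barrierDerivX (k s t₀ x₀ ε γ lam t x : ℝ) : ℝ :=
  -(ε * exp (-(γ * (t - t₀))) * exp (driftWeight k s x) *
    (driftWeightDeriv k s x * cos (lam * (x - x₀ - s * (t - t₀)))
      - lam * sin (lam * (x - x₀ - s * (t - t₀)))))

def barrierDerivXX (k s t₀ x₀ ε γ lam t x : ℝ) : ℝ :=
  -(ε * exp (-(γ * (t - t₀))) * exp (driftWeight k s x) *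
    ((driftWeightDeriv k s x ^ 2 + driftWeightDeriv2 k s x - lam ^ 2) *
        cos (lam * (x - x₀ - s * (t - t₀)))
      - 2 * driftWeightDeriv k s x * lam * sin (lam * (x - x₀ - s * (t - t₀)))))

section Barrier

variable (k s t₀ x₀ ε γ lam : ℝ) {t x : ℝ}

lemma hasDerivAt_barrier_t :
    HasDerivAt (barrier k s t₀ x₀ ε γ lam · x) (barrierDerivT k s t₀ x₀ ε γ lam t x) t := by
  have hexp := (((hasDerivAt_id t).sub_const t₀).const_mul γ).fun_neg.exp
  have hphase := (((hasDerivAt_id t).sub_const t₀).const_mul s).const_sub (x - x₀)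
  have hcos := (hphase.const_mul lam).cos
  refine ((((hexp.fun_mul hcos).const_mul (ε * exp (driftWeight k s x))).fun_neg).congr_deriv ?_)
    |>.congr_of_eventuallyEq (Eventually.of_forall fun y => ?_)
  · simp only [barrierDerivT, id]; ring
  · simp only [barrier, id]; ring

lemma hasDerivAt_barrier_x (hk : k ≠ 0) (hx : x ∈ Ioo (-1 : ℝ) 1) :
    HasDerivAt (barrier k s t₀ x₀ ε γ lam t) (barrierDerivX k s t₀ x₀ ε γ lam t x) x := by
  have hexp := (hasDerivAt_driftWeight s hk hx).exp
  have hcos := ((((hasDerivAt_id x).sub_const x₀).sub_const (s * (t - t₀))).const_mul lam).cos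
  refine ((((hexp.fun_mul hcos).const_mul (ε * exp (-(γ * (t - t₀))))).fun_neg).congr_deriv ?_)
    |>.congr_of_eventuallyEq (Eventually.of_forall fun y => ?_)
  · simp only [barrierDerivX, id]; ring
  · simp only [barrier, id]; ring

lemma hasDerivAt_barrierDerivX (hk : k ≠ 0) (hx : x ∈ Ioo (-1 : ℝ) 1) :
    HasDerivAt (barrierDerivX k s t₀ x₀ ε γ lam t) (barrierDerivXX k s t₀ x₀ ε γ lam t x) x := by
  have hexp := (hasDerivAt_driftWeight s hk hx).exp
  have hphase := (((hasDerivAt_id x).sub_const x₀).sub_const (s * (t - t₀))).const_mul lam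
  have hinner := ((hasDerivAt_driftWeightDeriv s hk hx).fun_mul hphase.cos).fun_sub
    (hphase.sin.const_mul lam)
  refine ((((hexp.fun_mul hinner).const_mul (ε * exp (-(γ * (t - t₀))))).fun_neg).congr_deriv ?_)
    |>.congr_of_eventuallyEq (Eventually.of_forall fun y => ?_)
  · simp only [barrierDerivXX, id]; ring
  · simp only [barrierDerivX, id]; ring

lemma legendreHeatOp_barrier (hk : k ≠ 0) (hx : x ∈ Ioo (-1 : ℝ) 1) :
    legendreHeatOp k x (barrierDerivT k s t₀ x₀ ε γ lam t x)
        (barrierDerivX k s t₀ x₀ ε γ lam t x) (barrierDerivXX k s t₀ x₀ ε γ lam t x) =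
      -((γ + k + (2 * k * x - s) ^ 2 / (4 * k * (1 - x ^ 2)) - k * lam ^ 2 * (1 - x ^ 2)) *
        barrier k s t₀ x₀ ε γ lam t x) := by
  obtain ⟨hx₁, hx₂⟩ := hx
  have h1 : (1 : ℝ) - x ^ 2 ≠ 0 := by nlinarith
  simp only [legendreHeatOp, barrier, barrierDerivT, barrierDerivX, barrierDerivXX,
    driftWeightDeriv, driftWeightDeriv2]
  field_simp
  ring

end Barrier

section BarrierValues

variable {k s t₀ x₀ ε γ lam δ t x : ℝ}

lemma neg_mul_barrier_le_legendreHeatOp (hk : 0 < k) (hx : x ∈ Ioo (-1 : ℝ) 1)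
    (hW : barrier k s t₀ x₀ ε γ lam t x ≤ 0) :
    -((γ - k * lam ^ 2) * barrier k s t₀ x₀ ε γ lam t x) ≤
      legendreHeatOp k x (barrierDerivT k s t₀ x₀ ε γ lam t x)
        (barrierDerivX k s t₀ x₀ ε γ lam t x) (barrierDerivXX k s t₀ x₀ ε γ lam t x) := by
  rw [legendreHeatOp_barrier k s t₀ x₀ ε γ lam hk.ne' hx]
  have h1 : 0 < 1 - x ^ 2 := by nlinarith [hx.1, hx.2]
  have hrate : 0 ≤ (2 * k * x - s) ^ 2 / (4 * k * (1 - x ^ 2)) + k + k * lam ^ 2 * x ^ 2 := by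
    positivity
  nlinarith [mul_nonneg hrate (neg_nonneg.2 hW)]

lemma barrier_eq_zero_of_abs_eq (hδ : lam * δ = π / 2) (hlam : 0 ≤ lam)
    (hx : |x - (x₀ + s * (t - t₀))| = δ) : barrier k s t₀ x₀ ε γ lam t x = 0 := by
  have hcos : cos (lam * (x - x₀ - s * (t - t₀))) = 0 := by
    rw [← cos_abs, abs_mul, abs_of_nonneg hlam, sub_sub, hx, hδ, cos_pi_div_two]
  simp [barrier, hcos]

lemma neg_le_barrier_start (hε : 0 ≤ ε) :
    -(ε * exp (driftWeight k s x)) ≤ barrier k s t₀ x₀ ε γ lam t₀ x := by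
  simp only [barrier, sub_self, mul_zero, neg_zero, exp_zero, mul_one, neg_le_neg_iff]
  exact mul_le_of_le_one_right (by positivity) (cos_le_one _)

lemma barrier_center_neg (hε : 0 < ε) : barrier k s t₀ x₀ ε γ lam t (x₀ + s * (t - t₀)) < 0 := by
  simp only [barrier, sub_sub, sub_self, mul_zero, cos_zero, mul_one, neg_lt_zero]
  positivity

lemma continuousOn_barrier :
    ContinuousOn (fun p : ℝ × ℝ => barrier k s t₀ x₀ ε γ lam p.1 p.2)
      {p | p.2 ∈ Ioo (-1 : ℝ) 1} := by
  have hB := (continuousOn_driftWeight (k := k) s).comp (continuous_snd (X := ℝ)).continuousOn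
    (fun p hp => hp)
  unfold barrier
  fun_prop

end BarrierValues

lemma isOpen_cylQT (T : ℝ) : IsOpen (cylQT T) := isOpen_Ioo.prod isOpen_Ioo

lemma cylQT_subset (T : ℝ) : cylQT T ⊆ Icc 0 T ×ˢ Icc (-1) 1 :=
  prod_mono Ioo_subset_Icc_self Ioo_subset_Icc_self

lemma abs_affine_le_max {t₀ t₁ x₀ s t : ℝ} (ht : t ∈ Icc t₀ t₁) :
    |x₀ + s * (t - t₀)| ≤ max |x₀| |x₀ + s * (t₁ - t₀)| := by
  obtain ⟨ht₀, ht₁⟩ := ht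
  rcases le_total 0 s with hs | hs
  · exact abs_le_max_abs_abs (by nlinarith) (by nlinarith)
  · rw [max_comm]
    exact abs_le_max_abs_abs (by nlinarith) (by nlinarith)

lemma stripAlong_subset_cylQT {T t₀ t₁ x₀ s δ : ℝ} (h₀ : (t₀, x₀) ∈ cylQT T)
    (h₁ : (t₁, x₀ + s * (t₁ - t₀)) ∈ cylQT T) (hδ : δ < 1 - max |x₀| |x₀ + s * (t₁ - t₀)|) :
    stripAlong (fun t => x₀ + s * (t - t₀)) t₀ t₁ δ ⊆ cylQT T := by
  rintro ⟨t, x⟩ ⟨ht, hx⟩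
  have hc := abs_affine_le_max (x₀ := x₀) (s := s) ht
  refine ⟨⟨h₀.1.1.trans_le ht.1, ht.2.trans_lt h₁.1.2⟩, abs_lt.1 ?_⟩
  linarith [abs_sub_abs_le_abs_sub x (x₀ + s * (t - t₀))]

structure IsNonposSubsolution (T k : ℝ) (a u ut ux uxx : ℝ → ℝ → ℝ) : Prop where
  continuousOn : ContinuousOn (fun p : ℝ × ℝ => u p.1 p.2) (Icc 0 T ×ˢ Icc (-1) 1)
  hasDerivAt_t : ∀ t x, (t, x) ∈ cylQT T → HasDerivAt (u · x) (ut t x) t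
  hasDerivAt_x : ∀ t x, (t, x) ∈ cylQT T → HasDerivAt (u t) (ux t x) x
  hasDerivAt_xx : ∀ t x, (t, x) ∈ cylQT T → HasDerivAt (ux t) (uxx t x) x
  nonpos : ∀ t x, (t, x) ∈ cylQT T → u t x ≤ 0
  le_mul : ∀ t x, (t, x) ∈ cylQT T → legendreHeatOp k x (ut t x) (ux t x) (uxx t x) ≤ a t x * u t x

namespace IsNonposSubsolution

variable {T k M : ℝ} {a u ut ux uxx : ℝ → ℝ → ℝ}

lemma continuousAt (hu : IsNonposSubsolution T k a u ut ux uxx) {p : ℝ × ℝ} (hp : p ∈ cylQT T) :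
    ContinuousAt (fun p : ℝ × ℝ => u p.1 p.2) p :=
  hu.continuousOn.continuousAt <| mem_of_superset ((isOpen_cylQT T).mem_nhds hp) (cylQT_subset T)

theorem le_barrier (hu : IsNonposSubsolution T k a u ut ux uxx) (hk : 0 < k) (hM : 0 < M)
    (ha : ∀ t x, (t, x) ∈ cylQT T → -M ≤ a t x) {t₀ t₁ x₀ s ε lam δ : ℝ}
    (hstrip : stripAlong (fun t => x₀ + s * (t - t₀)) t₀ t₁ δ ⊆ cylQT T)
    (hlam : 0 ≤ lam) (hlamδ : lam * δ = π / 2) (hε : 0 ≤ ε)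
    (hstart : ∀ x, |x - x₀| ≤ δ → u t₀ x ≤ -(ε * exp (driftWeight k s x))) :
    ∀ p ∈ stripAlong (fun t => x₀ + s * (t - t₀)) t₀ t₁ δ,
      u p.1 p.2 ≤ barrier k s t₀ x₀ ε (M + k * lam ^ 2) lam p.1 p.2 := by
  set W := barrier k s t₀ x₀ ε (M + k * lam ^ 2) lam
  have hQ : ∀ t ∈ Icc t₀ t₁, ∀ x, |x - (x₀ + s * (t - t₀))| ≤ δ → (t, x) ∈ cylQT T :=
    fun t ht x hx => hstrip ⟨ht, hx⟩
  refine fun p hp => sub_nonpos.1 <| nonpos_on_stripAlong (c := fun t => x₀ + s * (t - t₀))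
    (z := fun t x => u t x - W t x)
    (zt := fun t x => ut t x - barrierDerivT k s t₀ x₀ ε (M + k * lam ^ 2) lam t x)
    (zx := fun t x => ux t x - barrierDerivX k s t₀ x₀ ε (M + k * lam ^ 2) lam t x)
    (zxx := fun t x => uxx t x - barrierDerivXX k s t₀ x₀ ε (M + k * lam ^ 2) lam t x)
    hk.le (by fun_prop) ?hD ?hcont ?hbottom ?hside ?hderiv ?hsub p hp
  case hD =>
    intro p hp
    obtain ⟨h₁, h₂⟩ := (hstrip hp).2
    nlinarith
  case hcont =>
    exact (hu.continuousOn.mono (hstrip.trans (cylQT_subset T))).sub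
      (continuousOn_barrier.mono fun p hp => (hstrip hp).2)
  case hbottom =>
    intro x hx
    simp only [sub_self, mul_zero, add_zero] at hx
    have hW : -(ε * exp (driftWeight k s x)) ≤ W t₀ x := neg_le_barrier_start hε
    linarith [hstart x hx]
  case hside =>
    intro t ht x hx
    simp only [W, barrier_eq_zero_of_abs_eq hlamδ hlam hx, sub_zero]
    exact hu.nonpos t x (hQ t ht x hx.le)
  case hderiv =>
    intro t ht x hx
    have htx := hQ t (Ioc_subset_Icc_self ht) x hx.le
    exact ⟨(hu.hasDerivAt_t t x htx).sub (hasDerivAt_barrier_t ..),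
      (hu.hasDerivAt_x t x htx).sub (hasDerivAt_barrier_x _ _ _ _ _ _ _ hk.ne' htx.2),
      (hu.hasDerivAt_xx t x htx).sub (hasDerivAt_barrierDerivX _ _ _ _ _ _ _ hk.ne' htx.2)⟩
  case hsub =>
    intro t ht x hx hpos
    have htx := hQ t (Ioc_subset_Icc_self ht) x hx.le
    have hW : W t x ≤ 0 := by linarith [hu.nonpos t x htx]
    have hLW := neg_mul_barrier_le_legendreHeatOp hk htx.2 hW
    rw [add_sub_cancel_right] at hLW
    have hau : a t x * u t x ≤ -M * u t x :=
      mul_le_mul_of_nonpos_right (ha t x htx) (hu.nonpos t x htx)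
    rw [legendreHeatOp_sub]
    nlinarith [hu.le_mul t x htx, mul_pos hM hpos]

theorem neg_of_neg_of_lt (hu : IsNonposSubsolution T k a u ut ux uxx) (hk : 0 < k) (hM : 0 < M)
    (ha : ∀ t x, (t, x) ∈ cylQT T → -M ≤ a t x) {t₀ x₀ t₁ x₁ : ℝ}
    (h₀ : (t₀, x₀) ∈ cylQT T) (h₁ : (t₁, x₁) ∈ cylQT T) (hlt : t₀ < t₁) (hneg : u t₀ x₀ < 0) :
    u t₁ x₁ < 0 := by
  obtain ⟨s, rfl⟩ : ∃ s, x₀ + s * (t₁ - t₀) = x₁ :=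
    ⟨(x₁ - x₀) / (t₁ - t₀), by field_simp [(sub_pos.2 hlt).ne']; ring⟩
  obtain ⟨δ₀, hδ₀, hnear⟩ : ∃ δ₀ > 0, ∀ x, dist x x₀ < δ₀ → u t₀ x < u t₀ x₀ / 2 := by
    have hcont : ContinuousAt (u t₀) x₀ :=
      (hu.continuousAt h₀).comp (f := fun x => (t₀, x)) (by fun_prop)
    exact Metric.eventually_nhds_iff.1 (hcont.eventually_lt continuousAt_const (by linarith))
  obtain ⟨δ, hδ, hδδ₀, hδρ⟩ :
      ∃ δ > 0, δ < δ₀ ∧ δ < 1 - max |x₀| |x₀ + s * (t₁ - t₀)| := by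
    have : max |x₀| |x₀ + s * (t₁ - t₀)| < 1 := max_lt (abs_lt.2 h₀.2) (abs_lt.2 h₁.2)
    exact ⟨min (δ₀ / 2) ((1 - max |x₀| |x₀ + s * (t₁ - t₀)|) / 2), by positivity,
      (min_le_left _ _).trans_lt (by linarith), (min_le_right _ _).trans_lt (by linarith)⟩
  have hstrip := stripAlong_subset_cylQT h₀ h₁ hδρ
  obtain ⟨C, hC⟩ := (isCompact_stripAlong (by fun_prop) t₀ t₁ δ).bddAbove_image
    ((continuousOn_driftWeight (k := k) s).comp continuous_snd.continuousOn
      fun p hp => (hstrip hp).2)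
  set ε := -(u t₀ x₀ / 2) * exp (-C)
  set lam := π / (2 * δ)
  have hε : 0 < ε := mul_pos (by linarith) (exp_pos _)
  have hstart : ∀ x, |x - x₀| ≤ δ → u t₀ x ≤ -(ε * exp (driftWeight k s x)) := by
    intro x hx
    have hB : driftWeight k s x ≤ C :=
      hC ⟨(t₀, x), ⟨left_mem_Icc.2 hlt.le, by simpa using hx⟩, rfl⟩
    have : ε * exp (driftWeight k s x) ≤ -(u t₀ x₀ / 2) := by
      rw [mul_assoc, ← exp_add]
      exact mul_le_of_le_one_right (by linarith) (exp_le_one_iff.2 (by linarith))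
    linarith [hnear x (by rw [Real.dist_eq]; linarith)]
  have hlamδ : lam * δ = π / 2 := by simp only [lam]; field_simp
  have hle := hu.le_barrier hk hM ha hstrip (by positivity) hlamδ hε.le hstart (t₁, x₀ + s * (t₁ - t₀)) ⟨right_mem_Icc.2 hlt.le, by simpa using hδ.le⟩
  exact hle.trans_lt (barrier_center_neg hε)

theorem eq_zero_of_eq_zero (hu : IsNonposSubsolution T k a u ut ux uxx) (hk : 0 < k)
    (ha : ∃ M, ∀ t x, (t, x) ∈ cylQT T → -M ≤ a t x) {t₁ x₁ : ℝ} (h₁ : (t₁, x₁) ∈ cylQT T)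
    (hzero : u t₁ x₁ = 0) : ∀ t ∈ Ioc 0 t₁, ∀ x ∈ Ioo (-1) 1, u t x = 0 := by
  obtain ⟨M, hM⟩ := ha
  intro t ht x hx
  have htx : (t, x) ∈ cylQT T := ⟨⟨ht.1, ht.2.trans_lt h₁.1.2⟩, hx⟩
  refine (hu.nonpos t x htx).antisymm (not_lt.1 fun hneg => ?_)
  obtain ⟨t', ht', hneg'⟩ : ∃ t' ∈ Ioo 0 t₁, u t' x < 0 := by
    rcases ht.2.lt_or_eq with hlt | rfl
    · exact ⟨t, ⟨ht.1, hlt⟩, hneg⟩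
    · have hcont : ContinuousAt (u · x) t :=
        (hu.continuousAt htx).comp (f := fun s => (s, x)) (by fun_prop)
      obtain ⟨t', hneg', ht'⟩ := (((hcont.eventually_lt continuousAt_const hneg).filter_mono
        nhdsWithin_le_nhds).and (Ioo_mem_nhdsLT ht.1)).exists
      exact ⟨t', ht', hneg'⟩
  refine (hu.neg_of_neg_of_lt hk (M := |M| + 1) (by positivity)
    (fun t x h => by linarith [hM t x h, le_abs_self M])
    ⟨⟨ht'.1, ht'.2.trans h₁.1.2⟩, hx⟩ h₁ ht'.2 hneg').ne hzero

end IsNonposSubsolution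

theorem strong_maximum_principle_cooperative_system_general
    (T k₁ k₂ : ℝ) (hk₁ : 0 < k₁) (hk₂ : 0 < k₂)
    (a b c d : ℝ → ℝ → ℝ)
    (ha_bdd : ∃ M : ℝ, ∀ p ∈ cylQT T, |a p.1 p.2| ≤ M)
    (hd_bdd : ∃ M : ℝ, ∀ p ∈ cylQT T, |d p.1 p.2| ≤ M)
    (hb_nonneg : ∀ p ∈ cylQT T, 0 ≤ b p.1 p.2)
    (hc_nonneg : ∀ p ∈ cylQT T, 0 ≤ c p.1 p.2)
    (u ut ux uxx : ℝ → ℝ → ℝ)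
    (v vt vx vxx : ℝ → ℝ → ℝ)
    (hu_cont : ContinuousOn (fun p : ℝ × ℝ => u p.1 p.2) (Icc (0:ℝ) T ×ˢ Icc (-1:ℝ) 1))
    (hv_cont : ContinuousOn (fun p : ℝ × ℝ => v p.1 p.2) (Icc (0:ℝ) T ×ˢ Icc (-1:ℝ) 1))
    (hut : ∀ t x : ℝ, (t, x) ∈ cylQT T → HasDerivAt (fun s => u s x) (ut t x) t)
    (hux : ∀ t x : ℝ, (t, x) ∈ cylQT T → HasDerivAt (fun y => u t y) (ux t x) x)
    (huxx : ∀ t x : ℝ, (t, x) ∈ cylQT T → HasDerivAt (fun y => ux t y) (uxx t x) x)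
    (hvt : ∀ t x : ℝ, (t, x) ∈ cylQT T → HasDerivAt (fun s => v s x) (vt t x) t)
    (hvx : ∀ t x : ℝ, (t, x) ∈ cylQT T → HasDerivAt (fun y => v t y) (vx t x) x)
    (hvxx : ∀ t x : ℝ, (t, x) ∈ cylQT T → HasDerivAt (fun y => vx t y) (vxx t x) x)
    (hu_nonpos : ∀ t x : ℝ, (t, x) ∈ cylQT T → u t x ≤ 0)
    (hv_nonpos : ∀ t x : ℝ, (t, x) ∈ cylQT T → v t x ≤ 0)
    (hinequ : ∀ t x : ℝ, (t, x) ∈ cylQT T →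
        ut t x - k₁ * (-(2 * x) * ux t x + (1 - x ^ 2) * uxx t x)
          ≤ a t x * u t x + b t x * v t x)
    (hineqv : ∀ t x : ℝ, (t, x) ∈ cylQT T →
        vt t x - k₂ * (-(2 * x) * vx t x + (1 - x ^ 2) * vxx t x)
          ≤ c t x * u t x + d t x * v t x) :
    (∀ t₁ x₁ : ℝ, (t₁, x₁) ∈ cylQT T → u t₁ x₁ = 0 →
      ∀ t ∈ Ioc (0:ℝ) t₁, ∀ x ∈ Ioo (-1:ℝ) 1, u t x = 0) ∧
    (∀ t₂ x₂ : ℝ, (t₂, x₂) ∈ cylQT T → v t₂ x₂ = 0 →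
      ∀ t ∈ Ioc (0:ℝ) t₂, ∀ x ∈ Ioo (-1:ℝ) 1, v t x = 0) := by
  have hu : IsNonposSubsolution T k₁ a u ut ux uxx := ⟨hu_cont, hut, hux, huxx, hu_nonpos,
    fun t x h => (hinequ t x h).trans <| add_le_of_nonpos_right <|
      mul_nonpos_of_nonneg_of_nonpos (hb_nonneg (t, x) h) (hv_nonpos t x h)⟩
  have hv : IsNonposSubsolution T k₂ d v vt vx vxx := ⟨hv_cont, hvt, hvx, hvxx, hv_nonpos,
    fun t x h => (hineqv t x h).trans <| add_le_of_nonpos_left <|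
      mul_nonpos_of_nonneg_of_nonpos (hc_nonneg (t, x) h) (hu_nonpos t x h)⟩
  have bdd_below : ∀ f : ℝ → ℝ → ℝ, (∃ M : ℝ, ∀ p ∈ cylQT T, |f p.1 p.2| ≤ M) →
      ∃ M, ∀ t x, (t, x) ∈ cylQT T → -M ≤ f t x :=
    fun f ⟨M, hM⟩ => ⟨M, fun t x h => neg_le_of_abs_le (hM (t, x) h)⟩
  exact ⟨fun t₁ x₁ h₁ => hu.eq_zero_of_eq_zero hk₁ (bdd_below a ha_bdd) h₁,
    fun t₂ x₂ h₂ => hv.eq_zero_of_eq_zero hk₂ (bdd_below d hd_bdd) h₂⟩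

/-- Strong maximum principle for linear cooperative degenerate parabolic systems:
let `u, v ≤ 0` be continuous on `[0,T] × [-1,1]`, of class `C^{1,2}` on `Q_T`, satisfying
`∂ₜu - k₁ ∂ₓ((1-x²)∂ₓu) ≤ a u + b v` and `∂ₜv - k₂ ∂ₓ((1-x²)∂ₓv) ≤ c u + d v` on `Q_T`,
with `a, b, c, d` bounded and `b, c ≥ 0` on `Q_T`. If `u` vanishes at some interior point
`(t₁, x₁) ∈ Q_T`, then `u ≡ 0` on `(0,t₁] × (-1,1)`; analogously, if `v` vanishes at some
`(t₂, x₂) ∈ Q_T`, then `v ≡ 0` on `(0,t₂] × (-1,1)`. -/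
theorem strong_maximum_principle_cooperative_system
    (T k₁ k₂ : ℝ) (hT : 0 < T) (hk₁ : 0 < k₁) (hk₂ : 0 < k₂)
    (a b c d : ℝ → ℝ → ℝ)
    (ha_bdd : ∃ M : ℝ, ∀ p ∈ cylQT T, |a p.1 p.2| ≤ M)
    (hb_bdd : ∃ M : ℝ, ∀ p ∈ cylQT T, |b p.1 p.2| ≤ M)
    (hc_bdd : ∃ M : ℝ, ∀ p ∈ cylQT T, |c p.1 p.2| ≤ M)
    (hd_bdd : ∃ M : ℝ, ∀ p ∈ cylQT T, |d p.1 p.2| ≤ M)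
    (hb_nonneg : ∀ p ∈ cylQT T, 0 ≤ b p.1 p.2)
    (hc_nonneg : ∀ p ∈ cylQT T, 0 ≤ c p.1 p.2)
    (u ut ux uxx : ℝ → ℝ → ℝ)
    (v vt vx vxx : ℝ → ℝ → ℝ)
    (hu_cont : ContinuousOn (fun p : ℝ × ℝ => u p.1 p.2) (Icc (0:ℝ) T ×ˢ Icc (-1:ℝ) 1))
    (hv_cont : ContinuousOn (fun p : ℝ × ℝ => v p.1 p.2) (Icc (0:ℝ) T ×ˢ Icc (-1:ℝ) 1))
    (hut : ∀ t x : ℝ, (t, x) ∈ cylQT T → HasDerivAt (fun s => u s x) (ut t x) t)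
    (hux : ∀ t x : ℝ, (t, x) ∈ cylQT T → HasDerivAt (fun y => u t y) (ux t x) x)
    (huxx : ∀ t x : ℝ, (t, x) ∈ cylQT T → HasDerivAt (fun y => ux t y) (uxx t x) x)
    (hvt : ∀ t x : ℝ, (t, x) ∈ cylQT T → HasDerivAt (fun s => v s x) (vt t x) t)
    (hvx : ∀ t x : ℝ, (t, x) ∈ cylQT T → HasDerivAt (fun y => v t y) (vx t x) x)
    (hvxx : ∀ t x : ℝ, (t, x) ∈ cylQT T → HasDerivAt (fun y => vx t y) (vxx t x) x)
    (hut_cont : ContinuousOn (fun p : ℝ × ℝ => ut p.1 p.2) (cylQT T))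
    (hux_cont : ContinuousOn (fun p : ℝ × ℝ => ux p.1 p.2) (cylQT T))
    (huxx_cont : ContinuousOn (fun p : ℝ × ℝ => uxx p.1 p.2) (cylQT T))
    (hvt_cont : ContinuousOn (fun p : ℝ × ℝ => vt p.1 p.2) (cylQT T))
    (hvx_cont : ContinuousOn (fun p : ℝ × ℝ => vx p.1 p.2) (cylQT T))
    (hvxx_cont : ContinuousOn (fun p : ℝ × ℝ => vxx p.1 p.2) (cylQT T))
    (hu_nonpos : ∀ t x : ℝ, (t, x) ∈ cylQT T → u t x ≤ 0)
    (hv_nonpos : ∀ t x : ℝ, (t, x) ∈ cylQT T → v t x ≤ 0)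
    (hinequ : ∀ t x : ℝ, (t, x) ∈ cylQT T →
        ut t x - k₁ * (-(2 * x) * ux t x + (1 - x ^ 2) * uxx t x)
          ≤ a t x * u t x + b t x * v t x)
    (hineqv : ∀ t x : ℝ, (t, x) ∈ cylQT T →
        vt t x - k₂ * (-(2 * x) * vx t x + (1 - x ^ 2) * vxx t x)
          ≤ c t x * u t x + d t x * v t x) :
    (∀ t₁ x₁ : ℝ, (t₁, x₁) ∈ cylQT T → u t₁ x₁ = 0 →
      ∀ t ∈ Ioc (0:ℝ) t₁, ∀ x ∈ Ioo (-1:ℝ) 1, u t x = 0) ∧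
    (∀ t₂ x₂ : ℝ, (t₂, x₂) ∈ cylQT T → v t₂ x₂ = 0 →
      ∀ t ∈ Ioc (0:ℝ) t₂, ∀ x ∈ Ioo (-1:ℝ) 1, v t x = 0) :=
  strong_maximum_principle_cooperative_system_general T k₁ k₂ hk₁ hk₂ a b c d ha_bdd hd_bdd
    hb_nonneg hc_nonneg u ut ux uxx v vt vx vxx hu_cont hv_cont hut hux huxx hvt hvx hvxx hu_nonpos
    hv_nonpos hinequ hineqv
end
end
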